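/- arXiv:2604.06089 — 10 statements merged into one kernel-verified Lean document; each statement's English description precedes it below -/
import Mathlib

section
/- Let G be a connected simple graph on the vertex set Fin N (with N ≥ 1) with real Laplacian matrix L (the degree matrix minus the adjacency matrix), and let g : Fin N → ℝ satisfy g i ≥ 0 for all i and g i₀ > 0 for at least one vertex i₀. Then the matrix L + diag(g), where diag(g) is the diagonal matrix with entries g i, is symmetric positive definite (in particular nonsingular). -/
open Matrix

/-!
Both `L` and `diag(g)` are positive semidefinite, so `xᵀ(L + diag g)x = 0` forces
`L x = 0` and `g ⊙ x = 0`. On a connected graph the first makes `x` constant, and the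
second makes that constant vanish at a vertex where `g` is positive.
-/

namespace Matrix.PosSemidef

open scoped ComplexOrder

variable {n 𝕜 : Type*} [Fintype n] [RCLike 𝕜] {A B : Matrix n n 𝕜}

theorem add_mulVec_eq_zero_iff (hA : A.PosSemidef) (hB : B.PosSemidef) (x : n → 𝕜) :
    (A + B) *ᵥ x = 0 ↔ A *ᵥ x = 0 ∧ B *ᵥ x = 0 := by
  rw [← (hA.add hB).dotProduct_mulVec_zero_iff, ← hA.dotProduct_mulVec_zero_iff,
    ← hB.dotProduct_mulVec_zero_iff, add_mulVec, dotProduct_add]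
  exact add_eq_zero_iff_of_nonneg (hA.dotProduct_mulVec_nonneg x) (hB.dotProduct_mulVec_nonneg x)

theorem posDef_of_mulVec_eq_zero [DecidableEq n] (hA : A.PosSemidef)
    (hker : ∀ x, A *ᵥ x = 0 → x = 0) : A.PosDef :=
  hA.posDef_iff_isUnit.mpr <| mulVec_injective_iff_isUnit.mp fun x y hxy =>
    sub_eq_zero.mp <| hker _ <| by rw [mulVec_sub, hxy, sub_self]

end Matrix.PosSemidef

namespace SimpleGraph

variable {V : Type*} [Fintype V] [DecidableEq V] {G : SimpleGraph V} [DecidableRel G.Adj]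

theorem eq_zero_of_lapMatrix_mulVec_eq_zero (hG : G.Connected) {x : V → ℝ}
    (hx : G.lapMatrix ℝ *ᵥ x = 0) {i₀ : V} (hi₀ : x i₀ = 0) : x = 0 :=
  funext fun i => (lapMatrix_mulVec_eq_zero_iff_forall_reachable G).mp hx i i₀ (hG i i₀) ▸ hi₀

theorem posDef_lapMatrix_add_diagonal (hG : G.Connected) {g : V → ℝ} (hg : 0 ≤ g) {i₀ : V}
    (hi₀ : g i₀ ≠ 0) : (G.lapMatrix ℝ + diagonal g).PosDef := by
  have hL := posSemidef_lapMatrix ℝ G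
  have hD := PosSemidef.diagonal hg
  refine (hL.add hD).posDef_of_mulVec_eq_zero fun x hx => ?_
  obtain ⟨hLx, hDx⟩ := (hL.add_mulVec_eq_zero_iff hD x).mp hx
  have hxi₀ : x i₀ = 0 := by
    simpa [mulVec_diagonal, hi₀] using congrFun hDx i₀
  exact eq_zero_of_lapMatrix_mulVec_eq_zero hG hLx hxi₀

end SimpleGraph

theorem lapMatrix_add_diagonal_posDef_general
    (N : ℕ) (G : SimpleGraph (Fin N)) [DecidableRel G.Adj]
    (hG : G.Connected) (g : Fin N → ℝ)
    (hg : ∀ i, 0 ≤ g i) (hg' : ∃ i₀, 0 < g i₀) :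
    (G.lapMatrix ℝ + Matrix.diagonal g).PosDef ∧
      IsUnit (G.lapMatrix ℝ + Matrix.diagonal g) := by
  obtain ⟨i₀, hi₀⟩ := hg'
  have hpd := SimpleGraph.posDef_lapMatrix_add_diagonal hG hg hi₀.ne'
  exact ⟨hpd, hpd.isUnit⟩

/-- For a connected simple graph `G` on `Fin N` (`N ≥ 1`) with real
Laplacian matrix `L = G.lapMatrix ℝ`, and `g : Fin N → ℝ` with `g i ≥ 0` for all `i`
and `g i₀ > 0` for some `i₀`, the matrix `L + diagonal g` is symmetric positive
definite, and in particular nonsingular. -/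
theorem lapMatrix_add_diagonal_posDef
    (N : ℕ) (hN : 1 ≤ N) (G : SimpleGraph (Fin N)) [DecidableRel G.Adj]
    (hG : G.Connected) (g : Fin N → ℝ)
    (hg : ∀ i, 0 ≤ g i) (hg' : ∃ i₀, 0 < g i₀) :
    (G.lapMatrix ℝ + Matrix.diagonal g).PosDef ∧
      IsUnit (G.lapMatrix ℝ + Matrix.diagonal g) :=
  lapMatrix_add_diagonal_posDef_general N G hG g hg hg'
end

section
/- Let A, P, S be real M×M matrices such that P is symmetric positive definite, S is symmetric positive definite, and AᵀP + PA + S = 0. Then A is Hurwitz: every eigenvalue μ ∈ ℂ of A (i.e., every element of the spectrum of the complexification of A) satisfies Re(μ) < 0. -/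
open Matrix
open scoped ComplexOrder

/-!
If `A v = μ v` with `v ≠ 0`, sandwiching the Lyapunov equation between `v*` and `v` gives
`2 Re μ · v*Pv = -v*Sv`. Both quadratic forms are positive, because the complexification of a
real positive definite matrix is positive definite (the form splits as the sum of the real forms
at `Re v` and `Im v`), so `Re μ < 0`.
-/

namespace Matrix

variable {n : Type*} [Fintype n]

theorem exists_mulVec_eq_smul_of_mem_spectrum {K : Type*} [Field K] [DecidableEq n]
    {A : Matrix n n K} {μ : K} (hμ : μ ∈ spectrum K A) :
    ∃ v ≠ 0, A *ᵥ v = μ • v := by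
  rw [← spectrum_toLin', ← Module.End.hasEigenvalue_iff_mem_spectrum] at hμ
  obtain ⟨v, hv⟩ := hμ.exists_hasEigenvector
  exact ⟨v, hv.2, hv.apply_eq_smul⟩

theorem re_star_dotProduct_map_ofReal_mulVec (P : Matrix n n ℝ) (v : n → ℂ) :
    (star v ⬝ᵥ P.map ((↑) : ℝ → ℂ) *ᵥ v).re =
      (fun i ↦ (v i).re) ⬝ᵥ P *ᵥ (fun i ↦ (v i).re) +
        (fun i ↦ (v i).im) ⬝ᵥ P *ᵥ (fun i ↦ (v i).im) := by
  simp only [dotProduct, mulVec, Pi.star_apply, map_apply, Complex.re_sum, Finset.mul_sum,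
    ← Finset.sum_add_distrib, Complex.mul_re, Complex.mul_im, Complex.star_def,
    Complex.conj_re, Complex.conj_im, Complex.ofReal_re, Complex.ofReal_im]
  refine Finset.sum_congr rfl fun i _ ↦ Finset.sum_congr rfl fun j _ ↦ ?_
  ring

theorem PosDef.map_ofReal {P : Matrix n n ℝ} (hP : P.PosDef) :
    (P.map ((↑) : ℝ → ℂ)).PosDef := by
  have hherm : (P.map ((↑) : ℝ → ℂ)).IsHermitian :=
    hP.isHermitian.map _ fun _ ↦ (Complex.conj_ofReal _).symm
  refine .of_dotProduct_mulVec_pos hherm fun v hv ↦ RCLike.pos_iff.2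
    ⟨?_, hherm.im_star_dotProduct_mulVec_self v⟩
  have hparts : (fun i ↦ (v i).re) ≠ 0 ∨ (fun i ↦ (v i).im) ≠ 0 := by
    contrapose! hv
    exact funext fun i ↦ Complex.ext (congrFun hv.1 i) (congrFun hv.2 i)
  have hnonneg (x : n → ℝ) : 0 ≤ x ⬝ᵥ P *ᵥ x := by
    simpa using hP.posSemidef.dotProduct_mulVec_nonneg x
  rw [RCLike.re_to_complex, re_star_dotProduct_map_ofReal_mulVec]
  rcases hparts with hre | him
  · simpa using add_pos_of_pos_of_nonneg (hP.dotProduct_mulVec_pos hre) (hnonneg _)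
  · simpa using add_pos_of_nonneg_of_pos (hnonneg _) (hP.dotProduct_mulVec_pos him)

variable {𝕜 : Type*} [RCLike 𝕜]

theorem star_dotProduct_conjTranspose_mul_add_mul_mulVec {A : Matrix n n 𝕜}
    {μ : 𝕜} {v : n → 𝕜} (hv : A *ᵥ v = μ • v) (P : Matrix n n 𝕜) :
    star v ⬝ᵥ (Aᴴ * P + P * A) *ᵥ v = (star μ + μ) * (star v ⬝ᵥ P *ᵥ v) := by
  rw [add_mulVec, dotProduct_add, ← mulVec_mulVec, ← mulVec_mulVec, hv, dotProduct_mulVec,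
    ← star_mulVec, hv, mulVec_smul, star_smul, smul_dotProduct, dotProduct_smul, smul_eq_mul,
    smul_eq_mul]
  ring

theorem re_neg_of_lyapunov_of_mulVec_eq_smul {A P S : Matrix n n 𝕜} (hP : P.PosDef)
    (hS : S.PosDef) (hLyap : Aᴴ * P + P * A + S = 0) {μ : 𝕜} {v : n → 𝕜} (hv₀ : v ≠ 0)
    (hv : A *ᵥ v = μ • v) : RCLike.re μ < 0 := by
  have hkey : (2 * RCLike.re μ : ℝ) * RCLike.re (star v ⬝ᵥ P *ᵥ v) =
      -RCLike.re (star v ⬝ᵥ S *ᵥ v) := by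
    rw [← RCLike.re_ofReal_mul, RCLike.ofReal_mul, RCLike.ofReal_ofNat, ← RCLike.add_conj,
      add_comm, ← RCLike.star_def, ← star_dotProduct_conjTranspose_mul_add_mul_mulVec hv,
      eq_neg_of_add_eq_zero_left hLyap, neg_mulVec, dotProduct_neg, map_neg]
  have hPpos := (RCLike.pos_iff.1 (hP.dotProduct_mulVec_pos hv₀)).1
  have hSpos := (RCLike.pos_iff.1 (hS.dotProduct_mulVec_pos hv₀)).1
  nlinarith

end Matrix

/-- If `P` and `S` are symmetric positive definite real matrices with
`AᵀP + PA + S = 0`, then `A` is Hurwitz: every eigenvalue `μ ∈ ℂ` of (the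
complexification of) `A` has negative real part. -/
theorem lyapunov_implies_hurwitz
    (M : ℕ)
    (A P S : Matrix (Fin M) (Fin M) ℝ)
    (hP : P.PosDef) (hS : S.PosDef)
    (hLyap : Aᵀ * P + P * A + S = 0)
    (μ : ℂ) (hμ : μ ∈ spectrum ℂ (A.map ((↑) : ℝ → ℂ))) :
    μ.re < 0 := by
  obtain ⟨v, hv₀, hv⟩ := exists_mulVec_eq_smul_of_mem_spectrum hμ
  have hLyapℂ : (A.map ((↑) : ℝ → ℂ))ᴴ * P.map (↑) + P.map (↑) * A.map (↑) + S.map (↑) = 0 := by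
    have hconj : (A.map ((↑) : ℝ → ℂ))ᴴ = Aᵀ.map (↑) := by ext; simp
    have hmap := congrArg Complex.ofRealHom.mapMatrix hLyap
    rw [map_add, map_add, map_mul, map_mul, map_zero] at hmap
    rwa [hconj]
  exact re_neg_of_lyapunov_of_mulVec_eq_smul hP.map_ofReal hS.map_ofReal hLyapℂ hv₀ hv
end

section
/- Let A, P, S be real M×M matrices such that P is symmetric positive definite, S is symmetric positive definite, and AᵀP + PA + S = 0. Then every differentiable function δ : ℝ → ℝ^M satisfying δ'(t) = Aδ(t) for all t ≥ 0 converges to zero: ‖δ(t)‖ → 0 as t → ∞. -/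
/-!
`V x = ⟪x, P x⟫` is a Lyapunov function: by the Lyapunov equation, `V (δ t)` has derivative
`-⟪δ t, S (δ t)⟫`. By compactness of the unit sphere both quadratic forms are comparable with
`‖x‖²`, so this derivative is at most `-k V (δ t)` for some `k > 0`. Grönwall's inequality then
gives `V (δ t) ≤ V (δ 0) e^{-kt}`, and `c ‖δ t‖² ≤ V (δ t)` forces `‖δ t‖ → 0`.
-/

open Matrix Filter Real Topology ContinuousLinearMap
open scoped RealInnerProductSpace

theorem le_mul_exp_of_hasDerivAt_le_mul {f f' : ℝ → ℝ} {K : ℝ}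
    (hf : ∀ t ≥ 0, HasDerivAt f (f' t) t) (hbound : ∀ t ≥ 0, f' t ≤ K * f t)
    {t : ℝ} (ht : 0 ≤ t) : f t ≤ f 0 * exp (K * t) := by
  have hcont : ContinuousOn f (Set.Icc 0 t) :=
    fun s hs => (hf s hs.1).continuousAt.continuousWithinAt
  have := le_gronwallBound_of_liminf_deriv_right_le (K := K) (ε := 0) hcont
    (fun s hs _ hr => (hf s hs.1).hasDerivWithinAt.liminf_right_slope_le hr) le_rfl
    (fun s hs => (add_zero (K * f s)).symm ▸ hbound s hs.1) t ⟨ht, le_rfl⟩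
  rwa [gronwallBound_ε0, sub_zero] at this

variable {E : Type*} [NormedAddCommGroup E] [InnerProductSpace ℝ E]

theorem exists_pos_mul_sq_norm_le_inner_apply [FiniteDimensional ℝ E] {T : E →L[ℝ] E}
    (hT : ∀ x ≠ 0, 0 < ⟪x, T x⟫) : ∃ c > 0, ∀ x, c * ‖x‖ ^ 2 ≤ ⟪x, T x⟫ := by
  rcases subsingleton_or_nontrivial E with hE | hE
  · exact ⟨1, one_pos, fun x => by simp [Subsingleton.elim x 0]⟩
  obtain ⟨u, hu, hmin⟩ := (isCompact_sphere (0 : E) 1).exists_isMinOn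
    (NormedSpace.sphere_nonempty.2 zero_le_one)
    (continuous_id.inner T.continuous : Continuous fun x : E => ⟪x, T x⟫).continuousOn
  refine ⟨⟪u, T u⟫, hT u (ne_zero_of_mem_unit_sphere ⟨u, hu⟩), fun x => ?_⟩
  rcases eq_or_ne x 0 with rfl | hx
  · simp
  have hnx : ‖x‖ ≠ 0 := norm_ne_zero_iff.2 hx
  have hmin_x : ⟪u, T u⟫ ≤ ⟪‖x‖⁻¹ • x, T (‖x‖⁻¹ • x)⟫ :=
    hmin (show ‖x‖⁻¹ • x ∈ Metric.sphere (0 : E) 1 by simp [norm_smul, hnx])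
  simp only [map_smul, real_inner_smul_left, real_inner_smul_right] at hmin_x
  calc ⟪u, T u⟫ * ‖x‖ ^ 2 ≤ ‖x‖⁻¹ * (‖x‖⁻¹ * ⟪x, T x⟫) * ‖x‖ ^ 2 := by gcongr
    _ = ⟪x, T x⟫ := by field_simp

theorem real_inner_apply_le_opNorm_mul_sq (T : E →L[ℝ] E) (x : E) :
    ⟪x, T x⟫ ≤ ‖T‖ * ‖x‖ ^ 2 :=
  calc ⟪x, T x⟫ ≤ ‖x‖ * ‖T x‖ := real_inner_le_norm _ _
    _ ≤ ‖x‖ * (‖T‖ * ‖x‖) := by gcongr; exact T.le_opNorm x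
    _ = ‖T‖ * ‖x‖ ^ 2 := by ring

theorem exists_pos_mul_inner_apply_le_inner_apply [FiniteDimensional ℝ E] {S : E →L[ℝ] E}
    (hS : ∀ x ≠ 0, 0 < ⟪x, S x⟫) (P : E →L[ℝ] E) : ∃ k > 0, ∀ x, k * ⟪x, P x⟫ ≤ ⟪x, S x⟫ := by
  obtain ⟨c, hc, hcS⟩ := exists_pos_mul_sq_norm_le_inner_apply hS
  refine ⟨c / (‖P‖ + 1), by positivity, fun x => ?_⟩
  calc c / (‖P‖ + 1) * ⟪x, P x⟫ ≤ c / (‖P‖ + 1) * ((‖P‖ + 1) * ‖x‖ ^ 2) := by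
        gcongr; linarith [real_inner_apply_le_opNorm_mul_sq P x, sq_nonneg ‖x‖]
    _ = c * ‖x‖ ^ 2 := by field_simp
    _ ≤ ⟪x, S x⟫ := hcS x

variable [CompleteSpace E] {A P S : E →L[ℝ] E}

theorem inner_add_inner_eq_neg_of_lyapunov (hLyap : adjoint A * P + P * A + S = 0) (x : E) :
    ⟪A x, P x⟫ + ⟪x, P (A x)⟫ = -⟪x, S x⟫ := by
  have := congrArg (fun T : E →L[ℝ] E => ⟪x, T x⟫) hLyap
  simp only [_root_.add_apply, mul_apply_eq_comp, inner_add_right, adjoint_inner_right,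
    _root_.zero_apply, inner_zero_right] at this
  linarith

theorem hasDerivAt_inner_apply_of_lyapunov (hLyap : adjoint A * P + P * A + S = 0)
    {δ : ℝ → E} {t : ℝ} (hδ : HasDerivAt δ (A (δ t)) t) :
    HasDerivAt (fun s => ⟪δ s, P (δ s)⟫) (-⟪δ t, S (δ t)⟫) t := by
  rw [← inner_add_inner_eq_neg_of_lyapunov hLyap, add_comm]
  exact hδ.inner ℝ (P.hasFDerivAt.comp_hasDerivAt t hδ)

theorem tendsto_norm_zero_of_lyapunov [FiniteDimensional ℝ E]
    (hP : ∀ x ≠ 0, 0 < ⟪x, P x⟫) (hS : ∀ x ≠ 0, 0 < ⟪x, S x⟫)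
    (hLyap : adjoint A * P + P * A + S = 0) {δ : ℝ → E}
    (hδ : ∀ t ≥ 0, HasDerivAt δ (A (δ t)) t) :
    Tendsto (fun t => ‖δ t‖) atTop (𝓝 0) := by
  obtain ⟨c, hc, hcP⟩ := exists_pos_mul_sq_norm_le_inner_apply hP
  obtain ⟨k, hk, hkS⟩ := exists_pos_mul_inner_apply_le_inner_apply hS P
  set V := fun t => ⟪δ t, P (δ t)⟫
  have hdecay : ∀ t ≥ 0, V t ≤ V 0 * exp (-k * t) := fun t ht =>
    le_mul_exp_of_hasDerivAt_le_mul
      (fun s hs => hasDerivAt_inner_apply_of_lyapunov hLyap (hδ s hs))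
      (fun s _ => by linarith [hkS (δ s)]) ht
  have hexp : Tendsto (fun t => V 0 / c * exp (-k * t)) atTop (𝓝 0) := by
    simpa using (tendsto_exp_atBot.comp
      (tendsto_id.const_mul_atTop_of_neg (neg_neg_of_pos hk))).const_mul (V 0 / c)
  have hsq : Tendsto (fun t => ‖δ t‖ ^ 2) atTop (𝓝 0) := by
    refine squeeze_zero' (Eventually.of_forall fun t => by positivity) ?_ hexp
    filter_upwards [eventually_ge_atTop 0] with t ht
    rw [div_mul_eq_mul_div, le_div_iff₀ hc, mul_comm]
    exact (hcP (δ t)).trans (hdecay t ht)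
  simpa [Real.sqrt_sq (norm_nonneg _)] using hsq.sqrt

theorem Matrix.PosDef.inner_toEuclideanCLM_pos {n : Type*} [Fintype n] [DecidableEq n]
    {Q : Matrix n n ℝ} (hQ : Q.PosDef) (x : EuclideanSpace ℝ n) (hx : x ≠ 0) :
    0 < ⟪x, toEuclideanCLM (𝕜 := ℝ) Q x⟫ := by
  rw [inner_toEuclideanCLM]
  exact hQ.dotProduct_mulVec_pos (x := x.ofLp) (by simpa using hx)

/-- If `P` and `S` are symmetric positive definite real matrices with
`AᵀP + PA + S = 0`, then every differentiable `δ : ℝ → ℝ^M` (Euclidean space)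
satisfying `δ'(t) = Aδ(t)` for all `t ≥ 0` converges to zero: `‖δ(t)‖ → 0` as
`t → ∞`. -/
theorem lyapunov_implies_state_convergence
    (M : ℕ)
    (A P S : Matrix (Fin M) (Fin M) ℝ)
    (hP : P.PosDef) (hS : S.PosDef)
    (hLyap : Aᵀ * P + P * A + S = 0)
    (δ : ℝ → EuclideanSpace ℝ (Fin M))
    (hδ : Differentiable ℝ δ)
    (hode : ∀ t : ℝ, 0 ≤ t →
      deriv δ t = (WithLp.equiv 2 (Fin M → ℝ)).symm
        (A.mulVec ((WithLp.equiv 2 (Fin M → ℝ)) (δ t)))) :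
    Tendsto (fun t => ‖δ t‖) atTop (nhds 0) := by
  refine tendsto_norm_zero_of_lyapunov (A := toEuclideanCLM (𝕜 := ℝ) A)
    hP.inner_toEuclideanCLM_pos hS.inner_toEuclideanCLM_pos ?_
    fun t ht => hode t ht ▸ (hδ t).hasDerivAt
  rw [← star_eq_adjoint, ← map_star, ← map_mul, ← map_mul, ← map_add, ← map_add,
    star_eq_conjTranspose, conjTranspose_eq_transpose_of_trivial, hLyap, map_zero]
end

section
/- Let P be a symmetric real M×M matrix solving the generalized algebraic Riccati equation ĀᵀP + PĀ + Q − PB̄R⁻¹B̄ᵀP + PD̄Γ⁻¹D̄ᵀP = 0. Then for all vectors δ ∈ ℝ^M and w ∈ ℝ^{k₂}, setting u* := −R⁻¹B̄ᵀPδ and w* := Γ⁻¹D̄ᵀPδ, the following dissipation identity holds: δᵀP(Āδ + B̄u* + D̄w) = −(1/2)(δᵀQδ + (u*)ᵀRu* − wᵀΓw) − (1/2)(w* − w)ᵀΓ(w* − w). -/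
open Matrix

lemma aux_mv_dot {m n : ℕ} (A : Matrix (Fin m) (Fin n) ℝ) (x : Fin m → ℝ) (y : Fin n → ℝ) :
    A.mulVec y ⬝ᵥ x = y ⬝ᵥ Aᵀ.mulVec x := by
  rw [dotProduct_comm, dotProduct_mulVec, ← mulVec_transpose, dotProduct_comm]

/-- If the symmetric matrix `P` solves the GARE, then for all `δ` and
all `w`, with `u* = -R⁻¹B̄ᵀPδ` and `w* = Γ⁻¹D̄ᵀPδ`,
`δᵀP(Āδ + B̄u* + D̄w) = −(1/2)(δᵀQδ + (u*)ᵀRu* − wᵀΓw) − (1/2)(w*−w)ᵀΓ(w*−w)`. -/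
theorem dissipation_identity
    (M k₁ k₂ : ℕ) (hM : 0 < M) (hk₁ : 0 < k₁) (hk₂ : 0 < k₂)
    (Abar : Matrix (Fin M) (Fin M) ℝ)
    (Bbar : Matrix (Fin M) (Fin k₁) ℝ)
    (Dbar : Matrix (Fin M) (Fin k₂) ℝ)
    (R : Matrix (Fin k₁) (Fin k₁) ℝ) (hR : R.PosDef)
    (Γ : Matrix (Fin k₂) (Fin k₂) ℝ) (hΓ : Γ.PosDef)
    (Q : Matrix (Fin M) (Fin M) ℝ) (hQ : Q.PosSemidef)
    (P : Matrix (Fin M) (Fin M) ℝ) (hP : Pᵀ = P)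
    (hGARE : Abarᵀ * P + P * Abar + Q - P * Bbar * R⁻¹ * Bbarᵀ * P
      + P * Dbar * Γ⁻¹ * Dbarᵀ * P = 0)
    (δ : Fin M → ℝ) (w : Fin k₂ → ℝ) :
    let ustar : Fin k₁ → ℝ := -(R⁻¹ * Bbarᵀ * P).mulVec δ
    let wstar : Fin k₂ → ℝ := (Γ⁻¹ * Dbarᵀ * P).mulVec δ
    δ ⬝ᵥ P.mulVec (Abar.mulVec δ + Bbar.mulVec ustar + Dbar.mulVec w)
      = -(1 / 2) * (δ ⬝ᵥ Q.mulVec δ + ustar ⬝ᵥ R.mulVec ustar - w ⬝ᵥ Γ.mulVec w)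
        - (1 / 2) * ((wstar - w) ⬝ᵥ Γ.mulVec (wstar - w)) := by
  intro ustar wstar
  have hRdet : R.det ≠ 0 := hR.det_pos.ne'
  have hΓdet : Γ.det ≠ 0 := hΓ.det_pos.ne'
  have hRT : Rᵀ = R := by
    have := hR.1.eq; simpa using this
  have hΓT : Γᵀ = Γ := by
    have := hΓ.1.eq; simpa using this
  have hRiT : R⁻¹ᵀ = R⁻¹ := by rw [transpose_nonsing_inv, hRT]
  have hΓiT : Γ⁻¹ᵀ = Γ⁻¹ := by rw [transpose_nonsing_inv, hΓT]
  -- GARE applied to δ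
  have h0 : δ ⬝ᵥ ((Abarᵀ * P).mulVec δ) + δ ⬝ᵥ ((P * Abar).mulVec δ)
      + δ ⬝ᵥ (Q.mulVec δ) - δ ⬝ᵥ ((P * Bbar * R⁻¹ * Bbarᵀ * P).mulVec δ)
      + δ ⬝ᵥ ((P * Dbar * Γ⁻¹ * Dbarᵀ * P).mulVec δ) = 0 := by
    have := congrArg (fun A : Matrix (Fin M) (Fin M) ℝ => δ ⬝ᵥ A.mulVec δ) hGARE
    simpa [add_mulVec, sub_mulVec, dotProduct_add, dotProduct_sub] using this
  have hAsym : δ ⬝ᵥ ((Abarᵀ * P).mulVec δ) = δ ⬝ᵥ ((P * Abar).mulVec δ) := by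
    rw [dotProduct_comm, aux_mv_dot, transpose_mul, transpose_transpose, hP]
  -- u*ᵀ R u* = δᵀ S δ
  have hu : ustar ⬝ᵥ R.mulVec ustar
      = δ ⬝ᵥ ((P * Bbar * R⁻¹ * Bbarᵀ * P).mulVec δ) := by
    show (-(R⁻¹ * Bbarᵀ * P).mulVec δ) ⬝ᵥ R.mulVec (-(R⁻¹ * Bbarᵀ * P).mulVec δ) = _
    rw [mulVec_neg, dotProduct_neg, neg_dotProduct, neg_neg, mulVec_mulVec,
      aux_mv_dot, mulVec_mulVec]
    congr 1
    rw [transpose_mul, transpose_mul, hRiT, transpose_transpose, hP]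
    rw [show P * (Bbar * R⁻¹) * (R * (R⁻¹ * Bbarᵀ * P))
        = P * Bbar * (R⁻¹ * (R * (R⁻¹ * (Bbarᵀ * P)))) by
      simp only [Matrix.mul_assoc]]
    rw [Matrix.nonsing_inv_mul_cancel_left _ _ (isUnit_iff_ne_zero.mpr hRdet)]
    simp only [Matrix.mul_assoc]
  -- w*ᵀ Γ w* = δᵀ T δ
  have hw : wstar ⬝ᵥ Γ.mulVec wstar
      = δ ⬝ᵥ ((P * Dbar * Γ⁻¹ * Dbarᵀ * P).mulVec δ) := by
    show ((Γ⁻¹ * Dbarᵀ * P).mulVec δ) ⬝ᵥ Γ.mulVec ((Γ⁻¹ * Dbarᵀ * P).mulVec δ) = _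
    rw [mulVec_mulVec, aux_mv_dot, mulVec_mulVec]
    congr 1
    rw [transpose_mul, transpose_mul, hΓiT, transpose_transpose, hP]
    rw [show P * (Dbar * Γ⁻¹) * (Γ * (Γ⁻¹ * Dbarᵀ * P))
        = P * Dbar * (Γ⁻¹ * (Γ * (Γ⁻¹ * (Dbarᵀ * P)))) by
      simp only [Matrix.mul_assoc]]
    rw [Matrix.nonsing_inv_mul_cancel_left _ _ (isUnit_iff_ne_zero.mpr hΓdet)]
    simp only [Matrix.mul_assoc]
  -- cross term
  have hcross : wstar ⬝ᵥ Γ.mulVec w = δ ⬝ᵥ ((P * Dbar).mulVec w) := by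
    show ((Γ⁻¹ * Dbarᵀ * P).mulVec δ) ⬝ᵥ Γ.mulVec w = _
    rw [aux_mv_dot, mulVec_mulVec]
    congr 1
    rw [transpose_mul, transpose_mul, hΓiT, transpose_transpose, hP]
    rw [show P * (Dbar * Γ⁻¹) * Γ = P * Dbar * (Γ⁻¹ * Γ) by simp only [Matrix.mul_assoc]]
    rw [Matrix.nonsing_inv_mul _ (isUnit_iff_ne_zero.mpr hΓdet), Matrix.mul_one]
  have hcross' : w ⬝ᵥ Γ.mulVec wstar = δ ⬝ᵥ ((P * Dbar).mulVec w) := by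
    rw [dotProduct_mulVec, ← mulVec_transpose, hΓT, dotProduct_comm, hcross]
  -- expand LHS
  have hLHS : δ ⬝ᵥ P.mulVec (Abar.mulVec δ + Bbar.mulVec ustar + Dbar.mulVec w)
      = δ ⬝ᵥ ((P * Abar).mulVec δ)
        - δ ⬝ᵥ ((P * Bbar * R⁻¹ * Bbarᵀ * P).mulVec δ)
        + δ ⬝ᵥ ((P * Dbar).mulVec w) := by
    show δ ⬝ᵥ P.mulVec (Abar.mulVec δ + Bbar.mulVec (-(R⁻¹ * Bbarᵀ * P).mulVec δ)
        + Dbar.mulVec w) = _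
    rw [mulVec_neg, mulVec_add, mulVec_add, mulVec_neg, dotProduct_add, dotProduct_add,
      dotProduct_neg]
    simp only [mulVec_mulVec, Matrix.mul_assoc]
    ring
  -- expand the (w* - w) quadratic
  have hquad : (wstar - w) ⬝ᵥ Γ.mulVec (wstar - w)
      = wstar ⬝ᵥ Γ.mulVec wstar - wstar ⬝ᵥ Γ.mulVec w - w ⬝ᵥ Γ.mulVec wstar
        + w ⬝ᵥ Γ.mulVec w := by
    simp only [mulVec_sub, sub_dotProduct, dotProduct_sub]
    ring
  rw [hLHS, hu, hquad, hw, hcross, hcross']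
  linarith [h0, hAsym]
end

section
/- Let P be a symmetric positive semidefinite real M×M matrix solving the generalized algebraic Riccati equation ĀᵀP + PĀ + Q − PB̄R⁻¹B̄ᵀP + PD̄Γ⁻¹D̄ᵀP = 0. Let w : ℝ → ℝ^{k₂} be continuous and let δ : ℝ → ℝ^M be differentiable with δ'(t) = (Ā − B̄R⁻¹B̄ᵀP)δ(t) + D̄w(t) for all t. Define u*(t) := −R⁻¹B̄ᵀPδ(t). Then the bounded L₂-gain condition holds: for every T ≥ 0, ∫₀ᵀ (δ(t)ᵀQδ(t) + u*(t)ᵀRu*(t)) dt ≤ ∫₀ᵀ w(t)ᵀΓw(t) dt + δ(0)ᵀPδ(0). -/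
/-!
The storage function `V(t) = δ(t)ᵀ P δ(t)` satisfies, along closed-loop trajectories, the
dissipation inequality `δᵀQδ + u*ᵀRu* + V' ≤ wᵀΓw`: contracting the GARE with `δ` turns the
left side into `2 (D̄ᵀPδ)·w − (D̄ᵀPδ)ᵀΓ⁻¹(D̄ᵀPδ)`, and completing the square in `w` bounds this by
`wᵀΓw`. Integrating over `[0, T]` and dropping `V(T) ≥ 0` gives the gain bound.
-/

open Matrix intervalIntegral Set MeasureTheory

variable {m n k l : Type*} [Fintype m] [Fintype n] [Fintype k] [Fintype l]

theorem HasDerivAt.dotProduct {f g : ℝ → m → ℝ} {f' g' : m → ℝ} {t : ℝ}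
    (hf : HasDerivAt f f' t) (hg : HasDerivAt g g' t) :
    HasDerivAt (fun s => f s ⬝ᵥ g s) (f' ⬝ᵥ g t + f t ⬝ᵥ g') t := by
  have hfi := hasDerivAt_pi.mp hf
  have hgi := hasDerivAt_pi.mp hg
  have h := HasDerivAt.fun_sum fun i (_ : i ∈ Finset.univ) => (hfi i).fun_mul (hgi i)
  rwa [Finset.sum_add_distrib] at h

theorem HasDerivAt.const_mulVec (A : Matrix n m ℝ) {f : ℝ → m → ℝ} {f' : m → ℝ} {t : ℝ}
    (hf : HasDerivAt f f' t) : HasDerivAt (fun s => A *ᵥ f s) (A *ᵥ f') t :=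
  (Matrix.mulVecLin A).toContinuousLinearMap.hasFDerivAt.comp_hasDerivAt t hf

theorem integral_le_integral_add_sub_of_hasDerivAt {V V' L S : ℝ → ℝ} {a b : ℝ} (hab : a ≤ b)
    (hV : ContinuousOn V (Icc a b)) (hV' : ∀ t ∈ Ioo a b, HasDerivAt V (V' t) t)
    (hL : IntervalIntegrable L volume a b)
    (hS : IntervalIntegrable S volume a b)
    (hdiss : ∀ t ∈ Ioo a b, L t + V' t ≤ S t) :
    ∫ t in a..b, L t ≤ (∫ t in a..b, S t) + V a - V b := by
  have hint : IntegrableOn (fun t => S t - L t) (Icc a b) :=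
    (intervalIntegrable_iff_integrableOn_Icc_of_le hab).mp (hS.sub hL)
  have h := sub_le_integral_of_hasDeriv_right_of_le hab hV
    (fun t ht => (hV' t ht).hasDerivWithinAt) hint (fun t ht => by
      linarith [hdiss t ht])
  rw [integral_sub hS hL] at h
  linarith

namespace Matrix

lemma dotProduct_transpose_mulVec_self (A : Matrix m m ℝ) (x : m → ℝ) :
    x ⬝ᵥ Aᵀ *ᵥ x = x ⬝ᵥ A *ᵥ x := by
  rw [dotProduct_mulVec, vecMul_transpose, dotProduct_comm]

lemma dotProduct_mulVec_comm_of_transpose_eq {A : Matrix m m ℝ} (hA : Aᵀ = A) (x y : m → ℝ) :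
    x ⬝ᵥ A *ᵥ y = y ⬝ᵥ A *ᵥ x := by
  rw [dotProduct_mulVec, ← mulVec_transpose, hA, dotProduct_comm]

lemma mulVec_dotProduct_mulVec (A : Matrix m n ℝ) (B : Matrix m k ℝ) (x : n → ℝ) (y : k → ℝ) :
    A *ᵥ x ⬝ᵥ B *ᵥ y = x ⬝ᵥ (Aᵀ * B) *ᵥ y := by
  rw [← mulVec_mulVec, dotProduct_mulVec x, vecMul_transpose, dotProduct_comm]

-- Also true for singular `A`, where `A⁻¹ = 0`.
lemma nonsing_inv_mul_mul_nonsing_inv [DecidableEq n] (A : Matrix n n ℝ) :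
    A⁻¹ * A * A⁻¹ = A⁻¹ := by
  by_cases h : IsUnit A.det
  · rw [nonsing_inv_mul A h, one_mul]
  · simp [nonsing_inv_apply_not_isUnit A h]

lemma PosDef.two_mul_dotProduct_le [DecidableEq n] {Γ : Matrix n n ℝ} (hΓ : Γ.PosDef)
    (z v : n → ℝ) :
    2 * (z ⬝ᵥ v) ≤ v ⬝ᵥ Γ *ᵥ v + z ⬝ᵥ Γ⁻¹ *ᵥ z := by
  have hsymm : Γᵀ = Γ := (isHermitian_iff_isSymm.mp hΓ.isHermitian).eq
  have hunit : IsUnit Γ.det := hΓ.det_pos.ne'.isUnit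
  have hsq := hΓ.posSemidef.dotProduct_mulVec_nonneg (v - Γ⁻¹ *ᵥ z)
  have hcancel : Γ *ᵥ (Γ⁻¹ *ᵥ z) = z := by
    rw [mulVec_mulVec, mul_nonsing_inv Γ hunit, one_mulVec]
  have hcross : Γ⁻¹ *ᵥ z ⬝ᵥ Γ *ᵥ v = z ⬝ᵥ v := by
    rw [mulVec_dotProduct_mulVec, transpose_nonsing_inv, hsymm, nonsing_inv_mul Γ hunit,
      one_mulVec]
  simp only [star_trivial, mulVec_sub, dotProduct_sub, sub_dotProduct, hcancel, hcross] at hsq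
  rw [dotProduct_comm v z, dotProduct_comm (Γ⁻¹ *ᵥ z)] at hsq
  linarith

end Matrix

lemma closedLoop_riccati_eq [DecidableEq k] [DecidableEq l] {A Q P : Matrix m m ℝ}
    {B : Matrix m k ℝ} {D : Matrix m l ℝ} {R : Matrix k k ℝ} {Γ : Matrix l l ℝ}
    (hP : Pᵀ = P) (hR : Rᵀ = R)
    (hGARE : Aᵀ * P + P * A + Q - P * B * R⁻¹ * Bᵀ * P + P * D * Γ⁻¹ * Dᵀ * P = 0) :
    Q + (R⁻¹ * Bᵀ * P)ᵀ * R * (R⁻¹ * Bᵀ * P)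
      + ((A - B * R⁻¹ * Bᵀ * P)ᵀ * P + P * (A - B * R⁻¹ * Bᵀ * P))
      = -(P * D * Γ⁻¹ * Dᵀ * P) := by
  have hRinv : (R⁻¹)ᵀ = R⁻¹ := by rw [transpose_nonsing_inv, hR]
  have hgain : (R⁻¹ * Bᵀ * P)ᵀ * R * (R⁻¹ * Bᵀ * P) = P * B * R⁻¹ * Bᵀ * P := by
    simp only [transpose_mul, transpose_transpose, hP, hRinv, Matrix.mul_assoc]
    rw [← Matrix.mul_assoc R⁻¹ R, ← Matrix.mul_assoc (R⁻¹ * R), nonsing_inv_mul_mul_nonsing_inv]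
  rw [hgain, eq_neg_iff_add_eq_zero, ← hGARE]
  simp only [transpose_sub, transpose_mul, transpose_transpose, hP, hRinv, Matrix.mul_sub,
    Matrix.sub_mul, Matrix.mul_assoc]
  abel

lemma riccati_dissipation_le [DecidableEq k] [DecidableEq l] {A Q P : Matrix m m ℝ}
    {B : Matrix m k ℝ} {D : Matrix m l ℝ} {R : Matrix k k ℝ} {Γ : Matrix l l ℝ}
    (hP : Pᵀ = P) (hR : Rᵀ = R) (hΓ : Γ.PosDef)
    (hGARE : Aᵀ * P + P * A + Q - P * B * R⁻¹ * Bᵀ * P + P * D * Γ⁻¹ * Dᵀ * P = 0)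
    (d : m → ℝ) (v : l → ℝ) :
    d ⬝ᵥ Q *ᵥ d + -((R⁻¹ * Bᵀ * P) *ᵥ d) ⬝ᵥ R *ᵥ -((R⁻¹ * Bᵀ * P) *ᵥ d)
      + 2 * (d ⬝ᵥ P *ᵥ ((A - B * R⁻¹ * Bᵀ * P) *ᵥ d + D *ᵥ v))
      ≤ v ⬝ᵥ Γ *ᵥ v := by
  have hsum := congrArg (fun X => d ⬝ᵥ X *ᵥ d) (closedLoop_riccati_eq hP hR hGARE)
  set K := R⁻¹ * Bᵀ * P
  set Acl := A - B * R⁻¹ * Bᵀ * P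
  set z := (Dᵀ * P) *ᵥ d
  have hcost : -(K *ᵥ d) ⬝ᵥ R *ᵥ -(K *ᵥ d) = d ⬝ᵥ (Kᵀ * R * K) *ᵥ d := by
    rw [mulVec_neg, dotProduct_neg, neg_dotProduct, neg_neg, mulVec_mulVec,
      mulVec_dotProduct_mulVec, Matrix.mul_assoc]
  have hdrift : d ⬝ᵥ (Aclᵀ * P) *ᵥ d = d ⬝ᵥ (P * Acl) *ᵥ d := by
    rw [← dotProduct_transpose_mulVec_self, transpose_mul, transpose_transpose, hP]
  have hinput : d ⬝ᵥ P *ᵥ (D *ᵥ v) = z ⬝ᵥ v := by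
    rw [mulVec_mulVec, dotProduct_mulVec, ← mulVec_transpose, transpose_mul, hP]
  have hworst : d ⬝ᵥ (P * D * Γ⁻¹ * Dᵀ * P) *ᵥ d = z ⬝ᵥ Γ⁻¹ *ᵥ z := by
    rw [mulVec_mulVec, mulVec_dotProduct_mulVec, transpose_mul, transpose_transpose, hP]
    simp only [Matrix.mul_assoc]
  simp only [add_mulVec, dotProduct_add, neg_mulVec, dotProduct_neg, hdrift, hworst] at hsum
  rw [hcost, mulVec_add, dotProduct_add, mulVec_mulVec, hinput]
  linarith [hΓ.two_mul_dotProduct_le z v]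

theorem bounded_L2_gain_general
    (M k₁ k₂ : ℕ)
    (Abar : Matrix (Fin M) (Fin M) ℝ)
    (Bbar : Matrix (Fin M) (Fin k₁) ℝ)
    (Dbar : Matrix (Fin M) (Fin k₂) ℝ)
    (R : Matrix (Fin k₁) (Fin k₁) ℝ) (hR : R.PosDef)
    (Γ : Matrix (Fin k₂) (Fin k₂) ℝ) (hΓ : Γ.PosDef)
    (Q : Matrix (Fin M) (Fin M) ℝ)
    (P : Matrix (Fin M) (Fin M) ℝ) (hPsd : P.PosSemidef)
    (hGARE : Abarᵀ * P + P * Abar + Q - P * Bbar * R⁻¹ * Bbarᵀ * P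
      + P * Dbar * Γ⁻¹ * Dbarᵀ * P = 0)
    (w : ℝ → Fin k₂ → ℝ) (hw : Continuous w)
    (δ : ℝ → Fin M → ℝ)
    (hode : ∀ t : ℝ, HasDerivAt δ
      ((Abar - Bbar * R⁻¹ * Bbarᵀ * P).mulVec (δ t) + Dbar.mulVec (w t)) t)
    (T : ℝ) (hT : 0 ≤ T) :
    (∫ t in (0 : ℝ)..T,
        (δ t ⬝ᵥ Q.mulVec (δ t)
          + (-(R⁻¹ * Bbarᵀ * P).mulVec (δ t)) ⬝ᵥ
              R.mulVec (-(R⁻¹ * Bbarᵀ * P).mulVec (δ t))))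
      ≤ (∫ t in (0 : ℝ)..T, w t ⬝ᵥ Γ.mulVec (w t))
        + δ 0 ⬝ᵥ P.mulVec (δ 0) := by
  have hP : Pᵀ = P := (isHermitian_iff_isSymm.mp hPsd.isHermitian).eq
  have hRsymm : Rᵀ = R := (isHermitian_iff_isSymm.mp hR.isHermitian).eq
  have hδ : Continuous δ := continuous_iff_continuousAt.mpr fun t => (hode t).continuousAt
  have hV : ∀ t, HasDerivAt (fun s => δ s ⬝ᵥ P *ᵥ δ s) (2 * (δ t ⬝ᵥ P *ᵥ
      ((Abar - Bbar * R⁻¹ * Bbarᵀ * P) *ᵥ δ t + Dbar *ᵥ w t))) t := fun t => by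
    convert (hode t).dotProduct ((hode t).const_mulVec P) using 1
    rw [dotProduct_mulVec_comm_of_transpose_eq hP _ (δ t)]
    ring
  have hintegrated := integral_le_integral_add_sub_of_hasDerivAt hT
    (Continuous.continuousOn (by fun_prop)) (fun t _ => hV t)
    (Continuous.intervalIntegrable (by fun_prop) _ _)
    (Continuous.intervalIntegrable (by fun_prop) _ _)
    (fun t _ => riccati_dissipation_le hP hRsymm hΓ hGARE (δ t) (w t))
  have hVT : 0 ≤ δ T ⬝ᵥ P *ᵥ δ T := by simpa using hPsd.dotProduct_mulVec_nonneg (δ T)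
  linarith

/-- Bounded L₂-gain condition. If the symmetric positive semidefinite
matrix `P` solves the GARE and `δ` solves the closed-loop dynamics
`δ' = (Ā − B̄R⁻¹B̄ᵀP)δ + D̄w` with continuous `w`, then with `u* = −R⁻¹B̄ᵀPδ`,
for every `T ≥ 0`,
`∫₀ᵀ (δᵀQδ + (u*)ᵀRu*) dt ≤ ∫₀ᵀ wᵀΓw dt + δ(0)ᵀPδ(0)`. -/
theorem bounded_L2_gain
    (M k₁ k₂ : ℕ) (hM : 0 < M) (hk₁ : 0 < k₁) (hk₂ : 0 < k₂)
    (Abar : Matrix (Fin M) (Fin M) ℝ)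
    (Bbar : Matrix (Fin M) (Fin k₁) ℝ)
    (Dbar : Matrix (Fin M) (Fin k₂) ℝ)
    (R : Matrix (Fin k₁) (Fin k₁) ℝ) (hR : R.PosDef)
    (Γ : Matrix (Fin k₂) (Fin k₂) ℝ) (hΓ : Γ.PosDef)
    (Q : Matrix (Fin M) (Fin M) ℝ) (hQ : Q.PosSemidef)
    (P : Matrix (Fin M) (Fin M) ℝ) (hPsd : P.PosSemidef)
    (hGARE : Abarᵀ * P + P * Abar + Q - P * Bbar * R⁻¹ * Bbarᵀ * P
      + P * Dbar * Γ⁻¹ * Dbarᵀ * P = 0)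
    (w : ℝ → Fin k₂ → ℝ) (hw : Continuous w)
    (δ : ℝ → Fin M → ℝ)
    (hode : ∀ t : ℝ, HasDerivAt δ
      ((Abar - Bbar * R⁻¹ * Bbarᵀ * P).mulVec (δ t) + Dbar.mulVec (w t)) t)
    (T : ℝ) (hT : 0 ≤ T) :
    (∫ t in (0 : ℝ)..T,
        (δ t ⬝ᵥ Q.mulVec (δ t)
          + (-(R⁻¹ * Bbarᵀ * P).mulVec (δ t)) ⬝ᵥ
              R.mulVec (-(R⁻¹ * Bbarᵀ * P).mulVec (δ t))))
      ≤ (∫ t in (0 : ℝ)..T, w t ⬝ᵥ Γ.mulVec (w t))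
        + δ 0 ⬝ᵥ P.mulVec (δ 0) :=
  bounded_L2_gain_general M k₁ k₂ Abar Bbar Dbar R hR Γ hΓ Q P hPsd hGARE w hw δ hode T hT
end

section
/- Fix matrices A ∈ ℝ^{n×n}, B ∈ ℝ^{n×m₁}, D ∈ ℝ^{n×m₂}, and let S ∈ ℝ^{N×N} be invertible. For each i ∈ Fin N, let Q_i ∈ ℝ^{n×n} be symmetric, R_i ∈ ℝ^{m₁×m₁} symmetric positive definite, γ_i > 0 a real number, and P_i ∈ ℝ^{n×n} symmetric satisfying the local generalized algebraic Riccati equation AᵀP_i + P_iA + Q_i − P_iBR_i⁻¹BᵀP_i + (1/γ_i²)P_iDDᵀP_i = 0. Define the global weighting matrices Q := blockDiagonal(Q_i), R := (S ⊗ I_{m₁})ᵀ · blockDiagonal(R_i) · (S ⊗ I_{m₁}), and Γ := (S ⊗ I_{m₂})ᵀ · blockDiagonal(γ_i²·I_{m₂}) · (S ⊗ I_{m₂}), and set Ā := I_N ⊗ A, B̄ := S ⊗ B, D̄ := S ⊗ D, P := blockDiagonal(P_i). Then P solves the global generalized algebraic Riccati equation ĀᵀP + PĀ + Q − PB̄R⁻¹B̄ᵀP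 + PD̄Γ⁻¹D̄ᵀP = 0. -/
open Matrix Kronecker

/-- Block-diagonal matrix with blocks `M i`, indexed so that the outer (block)
index comes first, matching the Kronecker-product index order.  This is
`Matrix.blockDiagonal` up to reindexing of rows and columns by `Prod.swap`. -/
def blockDiag' {N n p : ℕ} (M : Fin N → Matrix (Fin n) (Fin p) ℝ) :
    Matrix (Fin N × Fin n) (Fin N × Fin p) ℝ :=
  (Matrix.blockDiagonal M).submatrix Prod.swap Prod.swap

section aux
variable {N n p q : ℕ}

lemma bd_apply (M : Fin N → Matrix (Fin n) (Fin p) ℝ) (i j r c) :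
    blockDiag' M (i, r) (j, c) = if i = j then M i r c else 0 := by
  simp [_root_.blockDiag', Matrix.blockDiagonal_apply]

lemma bd_mul (M : Fin N → Matrix (Fin n) (Fin p) ℝ) (M' : Fin N → Matrix (Fin p) (Fin q) ℝ) :
    blockDiag' M * blockDiag' M' = blockDiag' (fun i => M i * M' i) := by
  unfold _root_.blockDiag'
  rw [Matrix.blockDiagonal_mul,
    ← Matrix.submatrix_mul_equiv _ _ _ (Equiv.prodComm (Fin N) (Fin p)) _,
    Equiv.coe_prodComm]

lemma bd_transpose (M : Fin N → Matrix (Fin n) (Fin p) ℝ) :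
    (blockDiag' M)ᵀ = blockDiag' (fun i => (M i)ᵀ) := by
  unfold _root_.blockDiag'
  rw [Matrix.transpose_submatrix, Matrix.blockDiagonal_transpose]

lemma bd_add (M M' : Fin N → Matrix (Fin n) (Fin p) ℝ) :
    blockDiag' M + blockDiag' M' = blockDiag' (fun i => M i + M' i) := by
  ext ⟨i, r⟩ ⟨j, c⟩
  simp only [Matrix.add_apply, bd_apply]
  split_ifs <;> simp

lemma bd_sub (M M' : Fin N → Matrix (Fin n) (Fin p) ℝ) :
    blockDiag' M - blockDiag' M' = blockDiag' (fun i => M i - M' i) := by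
  ext ⟨i, r⟩ ⟨j, c⟩
  simp only [Matrix.sub_apply, bd_apply]
  split_ifs <;> simp

lemma bd_zero : blockDiag' (fun _ : Fin N => (0 : Matrix (Fin n) (Fin p) ℝ)) = 0 := by
  ext ⟨i, r⟩ ⟨j, c⟩
  simp [bd_apply]

lemma bd_one : blockDiag' (fun _ : Fin N => (1 : Matrix (Fin n) (Fin n) ℝ)) = 1 := by
  ext ⟨i, r⟩ ⟨j, c⟩
  simp [bd_apply, Matrix.one_apply, Prod.ext_iff, ite_and]

lemma bd_inv (M : Fin N → Matrix (Fin n) (Fin n) ℝ) (h : ∀ i, IsUnit (M i).det) :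
    (blockDiag' M)⁻¹ = blockDiag' (fun i => (M i)⁻¹) := by
  apply Matrix.inv_eq_right_inv
  rw [bd_mul]
  rw [show (fun i => M i * (M i)⁻¹) = fun _ => (1 : Matrix (Fin n) (Fin n) ℝ) from
    funext fun i => Matrix.mul_nonsing_inv _ (h i)]
  exact bd_one

lemma one_kron (B : Matrix (Fin n) (Fin p) ℝ) :
    (1 : Matrix (Fin N) (Fin N) ℝ) ⊗ₖ B = blockDiag' (fun _ => B) := by
  ext ⟨i, r⟩ ⟨j, c⟩
  simp [bd_apply, Matrix.one_apply, ite_mul]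

lemma sandwich {α β : Type*} [Fintype α] [Fintype β] [DecidableEq β]
    (E : Matrix α β ℝ) (M Δ : Matrix β β ℝ) (hM : IsUnit M.det) :
    (E * M) * (Mᵀ * Δ * M)⁻¹ * (E * M)ᵀ = E * Δ⁻¹ * Eᵀ := by
  have hMT : IsUnit Mᵀ.det := by rwa [Matrix.det_transpose]
  rw [Matrix.mul_inv_rev, Matrix.mul_inv_rev, Matrix.transpose_mul]
  simp only [← Matrix.mul_assoc]
  rw [Matrix.mul_nonsing_inv_cancel_right _ _ hM,
    Matrix.nonsing_inv_mul_cancel_right _ _ hMT]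

end aux

/-- If each symmetric `P i` solves the local GARE
`AᵀPᵢ + PᵢA + Qᵢ − PᵢBRᵢ⁻¹BᵀPᵢ + (1/γᵢ²)PᵢDDᵀPᵢ = 0`, and the global weighting
matrices are `Q = blockDiag(Qᵢ)`, `R = (S ⊗ I)ᵀ blockDiag(Rᵢ) (S ⊗ I)`,
`Γ = (S ⊗ I)ᵀ blockDiag(γᵢ²I) (S ⊗ I)`, with `Ā = I_N ⊗ A`, `B̄ = S ⊗ B`,
`D̄ = S ⊗ D`, then `P = blockDiag(Pᵢ)` solves the global GARE
`ĀᵀP + PĀ + Q − PB̄R⁻¹B̄ᵀP + PD̄Γ⁻¹D̄ᵀP = 0`. -/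
theorem blockDiagonal_solves_global_GARE
    (N n m₁ m₂ : ℕ)
    (A : Matrix (Fin n) (Fin n) ℝ)
    (B : Matrix (Fin n) (Fin m₁) ℝ)
    (D : Matrix (Fin n) (Fin m₂) ℝ)
    (S : Matrix (Fin N) (Fin N) ℝ) (hS : IsUnit S.det)
    (Qi : Fin N → Matrix (Fin n) (Fin n) ℝ) (hQi : ∀ i, (Qi i)ᵀ = Qi i)
    (Ri : Fin N → Matrix (Fin m₁) (Fin m₁) ℝ) (hRi : ∀ i, (Ri i).PosDef)
    (γ : Fin N → ℝ) (hγ : ∀ i, 0 < γ i)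
    (Pi : Fin N → Matrix (Fin n) (Fin n) ℝ) (hPi : ∀ i, (Pi i)ᵀ = Pi i)
    (hlocal : ∀ i, Aᵀ * Pi i + Pi i * A + Qi i
      - Pi i * B * (Ri i)⁻¹ * Bᵀ * Pi i
      + (1 / (γ i) ^ 2) • (Pi i * D * Dᵀ * Pi i) = 0) :
    let P := blockDiag' Pi
    let Q := blockDiag' Qi
    let R := (S ⊗ₖ (1 : Matrix (Fin m₁) (Fin m₁) ℝ))ᵀ * blockDiag' Ri
        * (S ⊗ₖ (1 : Matrix (Fin m₁) (Fin m₁) ℝ))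
    let Γ := (S ⊗ₖ (1 : Matrix (Fin m₂) (Fin m₂) ℝ))ᵀ
        * blockDiag' (fun i => ((γ i) ^ 2) • (1 : Matrix (Fin m₂) (Fin m₂) ℝ))
        * (S ⊗ₖ (1 : Matrix (Fin m₂) (Fin m₂) ℝ))
    let Abar := (1 : Matrix (Fin N) (Fin N) ℝ) ⊗ₖ A
    let Bbar := S ⊗ₖ B
    let Dbar := S ⊗ₖ D
    Abarᵀ * P + P * Abar + Q - P * Bbar * R⁻¹ * Bbarᵀ * P
      + P * Dbar * Γ⁻¹ * Dbarᵀ * P = 0 := by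
  intro P Q R Γ Abar Bbar Dbar
  have hγ2 : ∀ i, ((γ i) ^ 2 : ℝ) ≠ 0 := fun i => pow_ne_zero _ (hγ i).ne'
  have hM1 : IsUnit (S ⊗ₖ (1 : Matrix (Fin m₁) (Fin m₁) ℝ)).det := by
    rw [Matrix.det_kronecker, Matrix.det_one, one_pow, mul_one]
    exact hS.pow _
  have hM2 : IsUnit (S ⊗ₖ (1 : Matrix (Fin m₂) (Fin m₂) ℝ)).det := by
    rw [Matrix.det_kronecker, Matrix.det_one, one_pow, mul_one]
    exact hS.pow _
  -- the inverse of the scalar blocks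
  have hsm : ∀ i, (((γ i) ^ 2) • (1 : Matrix (Fin m₂) (Fin m₂) ℝ))⁻¹
      = ((γ i) ^ 2)⁻¹ • (1 : Matrix (Fin m₂) (Fin m₂) ℝ) := by
    intro i
    apply Matrix.inv_eq_right_inv
    rw [Matrix.smul_mul, Matrix.mul_smul, smul_smul, Matrix.one_mul,
      mul_inv_cancel₀ (hγ2 i), one_smul]
  -- sandwich identities
  have hBbar : Bbar = ((1 : Matrix (Fin N) (Fin N) ℝ) ⊗ₖ B)
      * (S ⊗ₖ (1 : Matrix (Fin m₁) (Fin m₁) ℝ)) := by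
    rw [← Matrix.mul_kronecker_mul, Matrix.one_mul, Matrix.mul_one]
  have hDbar : Dbar = ((1 : Matrix (Fin N) (Fin N) ℝ) ⊗ₖ D)
      * (S ⊗ₖ (1 : Matrix (Fin m₂) (Fin m₂) ℝ)) := by
    rw [← Matrix.mul_kronecker_mul, Matrix.one_mul, Matrix.mul_one]
  have hsand1 : Bbar * R⁻¹ * Bbarᵀ
      = blockDiag' (fun i => B * (Ri i)⁻¹ * Bᵀ) := by
    rw [hBbar, show R = (S ⊗ₖ (1 : Matrix (Fin m₁) (Fin m₁) ℝ))ᵀ * blockDiag' Ri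
        * (S ⊗ₖ (1 : Matrix (Fin m₁) (Fin m₁) ℝ)) from rfl,
      sandwich _ _ _ hM1,
      bd_inv Ri (fun i => (hRi i).det_pos.ne'.isUnit),
      one_kron, bd_transpose, bd_mul, bd_mul]
  have hsand2 : Dbar * Γ⁻¹ * Dbarᵀ
      = blockDiag' (fun i => D * (((γ i) ^ 2) • (1 : Matrix (Fin m₂) (Fin m₂) ℝ))⁻¹ * Dᵀ) := by
    rw [hDbar, show Γ = (S ⊗ₖ (1 : Matrix (Fin m₂) (Fin m₂) ℝ))ᵀ
        * blockDiag' (fun i => ((γ i) ^ 2) • (1 : Matrix (Fin m₂) (Fin m₂) ℝ))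
        * (S ⊗ₖ (1 : Matrix (Fin m₂) (Fin m₂) ℝ)) from rfl,
      sandwich _ _ _ hM2,
      bd_inv _ (fun i => by
        rw [Matrix.det_smul, Matrix.det_one, mul_one]
        exact ((hγ2 i).isUnit.pow _)),
      one_kron, bd_transpose, bd_mul, bd_mul]
  have hP : P = blockDiag' Pi := rfl
  have hQ : Q = blockDiag' Qi := rfl
  have hAbar : Abar = blockDiag' (fun _ => A) := one_kron A
  have h2 : P * Bbar * R⁻¹ * Bbarᵀ * P
      = blockDiag' (fun i => Pi i * (B * (Ri i)⁻¹ * Bᵀ) * Pi i) := by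
    have : P * Bbar * R⁻¹ * Bbarᵀ * P = P * (Bbar * R⁻¹ * Bbarᵀ) * P := by
      simp only [Matrix.mul_assoc]
    rw [this, hsand1, hP, bd_mul, bd_mul]
  have h3 : P * Dbar * Γ⁻¹ * Dbarᵀ * P
      = blockDiag' (fun i =>
          Pi i * (D * (((γ i) ^ 2) • (1 : Matrix (Fin m₂) (Fin m₂) ℝ))⁻¹ * Dᵀ) * Pi i) := by
    have : P * Dbar * Γ⁻¹ * Dbarᵀ * P = P * (Dbar * Γ⁻¹ * Dbarᵀ) * P := by
      simp only [Matrix.mul_assoc]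
    rw [this, hsand2, hP, bd_mul, bd_mul]
  rw [h2, h3, hP, hQ, hAbar, bd_transpose, bd_mul, bd_mul, bd_add, bd_add, bd_sub, bd_add]
  rw [show (fun i => Aᵀ * Pi i + Pi i * A + Qi i
      - Pi i * (B * (Ri i)⁻¹ * Bᵀ) * Pi i
      + Pi i * (D * (((γ i) ^ 2) • (1 : Matrix (Fin m₂) (Fin m₂) ℝ))⁻¹ * Dᵀ) * Pi i)
      = fun _ => (0 : Matrix (Fin n) (Fin n) ℝ) from funext fun i => ?_, bd_zero]
  simpa only [hsm i, Matrix.mul_smul, Matrix.smul_mul, Matrix.mul_one, Matrix.one_mul,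
    one_div, Matrix.mul_assoc] using hlocal i
end

section
/- Let G be a connected simple graph on vertex set Fin n (n ≥ 1) with real Laplacian matrix L. Then there exists a real n×n matrix X satisfying the Penrose conditions L·X·L = L, X·L·X = X, (L·X)ᵀ = L·X, (X·L)ᵀ = X·L, and moreover L·X = X·L = I_n − (1/n)·J, where J is the n×n all-ones matrix. -/
/-!
With `E = (1/n) J` the orthogonal projection onto the constant vectors, `L E = E L = 0`, and for a
connected graph the kernel of `L` consists exactly of the constants, so `L + E` is invertible.
Then `X = (L + E)⁻¹ - E` is the Moore–Penrose inverse of `L`, with `L X = X L = I - E`.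
-/

open Matrix

theorem exists_reflexive_inverse_of_isUnit_add {R : Type*} [Ring R] {a e : R}
    (he : IsIdempotentElem e) (hae : a * e = 0) (hea : e * a = 0) (hu : IsUnit (a + e)) :
    ∃ x : R, a * x * a = a ∧ x * a * x = x ∧ a * x = 1 - e ∧ x * a = 1 - e := by
  obtain ⟨u, hu⟩ := hu
  have hue : ↑u * e = e := by rw [hu, add_mul, hae, he, zero_add]
  have heu : e * ↑u = e := by rw [hu, mul_add, hea, he, zero_add]
  have hu'e : ↑u⁻¹ * e = e := (u.inv_mul_eq_iff_eq_mul).mpr hue.symm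
  have heu' : e * ↑u⁻¹ = e := (Units.mul_inv_eq_iff_eq_mul (b := u)).mpr heu.symm
  have ha : a = ↑u - e := eq_sub_of_add_eq hu.symm
  have hax : a * (↑u⁻¹ - e) = 1 - e := by
    rw [ha, mul_sub, sub_mul, sub_mul, Units.mul_inv, hue, heu', he]; abel
  have hxa : (↑u⁻¹ - e) * a = 1 - e := by
    rw [ha, mul_sub, sub_mul, sub_mul, Units.inv_mul, hu'e, heu, he]; abel
  have hxe : (↑u⁻¹ - e) * e = 0 := by rw [sub_mul, hu'e, he, sub_self]
  refine ⟨↑u⁻¹ - e, ?_, ?_, hax, hxa⟩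
  · rw [hax, sub_mul, one_mul, hea, sub_zero]
  · rw [mul_assoc, hax, mul_sub, mul_one, hxe, sub_zero]

namespace Matrix

variable (V R : Type*) [Fintype V] [Field R]

def averagingMatrix : Matrix V V R := (1 / (Fintype.card V : R)) • of fun _ _ => 1

variable {V R}

theorem transpose_averagingMatrix : (averagingMatrix V R)ᵀ = averagingMatrix V R := by
  ext; simp [averagingMatrix]

theorem isIdempotentElem_averagingMatrix [Nonempty V] [CharZero R] :
    IsIdempotentElem (averagingMatrix V R) := by
  ext i j
  simp [averagingMatrix, mul_apply]

theorem averagingMatrix_mulVec (v : V → R) :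
    averagingMatrix V R *ᵥ v = fun _ => (1 / (Fintype.card V : R)) * ∑ i, v i := by
  ext; simp [averagingMatrix, mulVec, dotProduct, Finset.mul_sum]

end Matrix

namespace SimpleGraph

variable {V : Type*} [Fintype V] [DecidableEq V] (G : SimpleGraph V) [DecidableRel G.Adj]
  {R : Type*} [Field R]

theorem lapMatrix_mul_averagingMatrix : G.lapMatrix R * averagingMatrix V R = 0 := by
  ext i j
  have := congrFun (G.lapMatrix_mulVec_const_eq_zero (R := R)) i
  simp_all [averagingMatrix, mul_apply, mulVec, dotProduct, ← Finset.sum_mul]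

theorem averagingMatrix_mul_lapMatrix : averagingMatrix V R * G.lapMatrix R = 0 := by
  rw [← transpose_inj, transpose_mul, transpose_averagingMatrix, (G.isSymm_lapMatrix (R := R)).eq,
    lapMatrix_mul_averagingMatrix, transpose_zero]

theorem isUnit_lapMatrix_add_averagingMatrix (hG : G.Connected) :
    IsUnit (G.lapMatrix ℝ + averagingMatrix V ℝ) := by
  have : Nonempty V := hG.nonempty
  rw [isUnit_iff_isUnit_det, isUnit_iff_ne_zero, Ne, ← exists_mulVec_eq_zero_iff]
  rintro ⟨v, hv0, hv⟩
  have hEv : averagingMatrix V ℝ *ᵥ v = 0 := by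
    have := congrArg (averagingMatrix V ℝ *ᵥ ·) hv
    simpa [mulVec_mulVec, mul_add, G.averagingMatrix_mul_lapMatrix,
      isIdempotentElem_averagingMatrix.eq] using this
  have hLv : G.lapMatrix ℝ *ᵥ v = 0 := by
    simpa [add_mulVec, hEv] using hv
  obtain ⟨i⟩ := hG.nonempty
  have hconst : ∀ j, v j = v i := fun j =>
    G.lapMatrix_mulVec_eq_zero_iff_forall_reachable.mp hLv j i (hG.preconnected j i)
  have hvi : v i = 0 := by
    simpa [averagingMatrix_mulVec, hconst] using congrFun hEv i
  exact hv0 (funext fun j => by rw [hconst j, hvi, Pi.zero_apply])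

end SimpleGraph

theorem lapMatrix_moore_penrose_inverse_general
    (n : ℕ) (G : SimpleGraph (Fin n)) [DecidableRel G.Adj]
    (hG : G.Connected) :
    ∃ X : Matrix (Fin n) (Fin n) ℝ,
      G.lapMatrix ℝ * X * G.lapMatrix ℝ = G.lapMatrix ℝ ∧
      X * G.lapMatrix ℝ * X = X ∧
      (G.lapMatrix ℝ * X)ᵀ = G.lapMatrix ℝ * X ∧
      (X * G.lapMatrix ℝ)ᵀ = X * G.lapMatrix ℝ ∧
      G.lapMatrix ℝ * X
        = 1 - (1 / (n : ℝ)) • (Matrix.of fun _ _ => (1 : ℝ)) ∧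
      X * G.lapMatrix ℝ
        = 1 - (1 / (n : ℝ)) • (Matrix.of fun _ _ => (1 : ℝ)) := by
  have : Nonempty (Fin n) := hG.nonempty
  obtain ⟨X, hLXL, hXLX, hLX, hXL⟩ := exists_reflexive_inverse_of_isUnit_add
    isIdempotentElem_averagingMatrix G.lapMatrix_mul_averagingMatrix
    G.averagingMatrix_mul_lapMatrix (G.isUnit_lapMatrix_add_averagingMatrix hG)
  have hsymm : (1 - averagingMatrix (Fin n) ℝ)ᵀ = 1 - averagingMatrix (Fin n) ℝ := by
    rw [transpose_sub, transpose_one, transpose_averagingMatrix]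
  have hE : averagingMatrix (Fin n) ℝ = (1 / (n : ℝ)) • of fun _ _ => 1 := by
    rw [averagingMatrix, Fintype.card_fin]
  refine ⟨X, hLXL, hXLX, ?_, ?_, ?_, ?_⟩ <;> simp only [hLX, hXL, hsymm, ← hE]

/-- For a connected simple graph `G` on `Fin n` (`n ≥ 1`) with real
Laplacian `L`, there exists a Moore–Penrose generalized inverse `X` of `L`
(satisfying the four Penrose conditions) with
`L·X = X·L = I − (1/n)·J`, where `J` is the all-ones matrix. -/
theorem lapMatrix_moore_penrose_inverse
    (n : ℕ) (hn : 1 ≤ n) (G : SimpleGraph (Fin n)) [DecidableRel G.Adj]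
    (hG : G.Connected) :
    ∃ X : Matrix (Fin n) (Fin n) ℝ,
      G.lapMatrix ℝ * X * G.lapMatrix ℝ = G.lapMatrix ℝ ∧
      X * G.lapMatrix ℝ * X = X ∧
      (G.lapMatrix ℝ * X)ᵀ = G.lapMatrix ℝ * X ∧
      (X * G.lapMatrix ℝ)ᵀ = X * G.lapMatrix ℝ ∧
      G.lapMatrix ℝ * X
        = 1 - (1 / (n : ℝ)) • (Matrix.of fun _ _ => (1 : ℝ)) ∧
      X * G.lapMatrix ℝ
        = 1 - (1 / (n : ℝ)) • (Matrix.of fun _ _ => (1 : ℝ)) :=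
  lapMatrix_moore_penrose_inverse_general n G hG
end

section
/- Let G be a connected simple graph on vertex set Fin N with N ≥ 2, let L be its real Laplacian matrix, let λ₂ := sInf(spectrum ℝ L \ {0}) be its smallest nonzero eigenvalue, and let diam(G) denote the diameter of G (the maximum over vertex pairs of the graph distance). Then diam(G) ≥ 4 / (N·λ₂); equivalently, N · λ₂ · diam(G) ≥ 4. -/
/-!
Let `L x = μ x` with `μ ≠ 0`. Since `L` is symmetric with `L 𝟙 = 0`, the entries of `x` sum to
zero, and `μ ‖x‖² = xᵀ L x` is the sum of `(xᵢ - xⱼ)²` over the edges. If `a ≤ xᵢ ≤ b` are the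
extreme entries, summing `(xᵢ - a) (b - xᵢ) ≥ 0` gives `4 ‖x‖² ≤ N (b - a)²`, while Cauchy–Schwarz
along a shortest path between the two extreme vertices gives `(b - a)² ≤ diam · μ ‖x‖²`.
-/

open Matrix Finset

theorem four_mul_sum_sq_le_card_mul_sq_sub {ι R : Type*} [Field R] [LinearOrder R]
    [IsStrictOrderedRing R] (s : Finset ι) {f : ι → R} {a b : R} (hf : ∑ i ∈ s, f i = 0)
    (ha : ∀ i ∈ s, a ≤ f i) (hb : ∀ i ∈ s, f i ≤ b) :
    4 * ∑ i ∈ s, f i ^ 2 ≤ #s * (b - a) ^ 2 := by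
  have hpoint : ∀ i ∈ s, f i ^ 2 ≤ (a + b) * f i - a * b := fun i hi => by
    nlinarith [mul_nonneg (sub_nonneg.2 (ha i hi)) (sub_nonneg.2 (hb i hi))]
  have hsq : ∑ i ∈ s, f i ^ 2 ≤ -(#s * (a * b)) := by
    calc ∑ i ∈ s, f i ^ 2 ≤ ∑ i ∈ s, ((a + b) * f i - a * b) := sum_le_sum hpoint
      _ = -(#s * (a * b)) := by
        rw [sum_sub_distrib, ← mul_sum, hf, sum_const, nsmul_eq_mul]; ring
  have hcard : (0 : R) ≤ #s := Nat.cast_nonneg _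
  nlinarith [mul_nonneg hcard (sq_nonneg (a + b))]

theorem Matrix.exists_mulVec_eq_smul_of_mem_spectrum_s13 {n K : Type*} [Fintype n] [DecidableEq n]
    [Field K] {A : Matrix n n K} {μ : K} (h : μ ∈ spectrum K A) :
    ∃ v ≠ 0, A *ᵥ v = μ • v := by
  rw [← spectrum_toLin', ← Module.End.hasEigenvalue_iff_mem_spectrum] at h
  obtain ⟨v, hv⟩ := h.exists_hasEigenvector
  exact ⟨v, hv.2, by simpa using hv.apply_eq_smul⟩

namespace SimpleGraph

variable {V R : Type*} {G : SimpleGraph V}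

def sqDiff [CommRing R] (x : V → R) : Sym2 V → R :=
  Sym2.lift ⟨fun i j => (x i - x j) ^ 2, fun i j => by ring⟩

@[simp]
theorem sqDiff_mk [CommRing R] (x : V → R) (i j : V) : sqDiff x s(i, j) = (x i - x j) ^ 2 := rfl

theorem sqDiff_nonneg [CommRing R] [LinearOrder R] [IsStrictOrderedRing R] (x : V → R)
    (e : Sym2 V) : 0 ≤ sqDiff x e := by
  induction e using Sym2.ind with
  | _ i j => exact sq_nonneg _

theorem Walk.sum_darts_sub {M : Type*} [AddCommGroup M] (x : V → M) {u v : V} (p : G.Walk u v) :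
    (p.darts.map fun d => x d.fst - x d.snd).sum = x u - x v := by
  induction p with
  | nil => simp
  | cons h p ih => simp [ih]

theorem Walk.sq_sub_le_length_mul_sum_edges [Field R] [LinearOrder R] [IsStrictOrderedRing R]
    (x : V → R) {u v : V} (p : G.Walk u v) :
    (x u - x v) ^ 2 ≤ p.length * (p.edges.map (sqDiff x)).sum := by
  have hedges : (p.edges.map (sqDiff x)).sum =
      (p.darts.map fun d => (x d.fst - x d.snd) ^ 2).sum := by
    simp [Walk.edges, Dart.edge, Function.comp_def]
  rw [hedges, ← p.sum_darts_sub, ← p.length_darts,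
    ← Fin.sum_univ_fun_getElem p.darts fun d => x d.fst - x d.snd,
    ← Fin.sum_univ_fun_getElem p.darts fun d => (x d.fst - x d.snd) ^ 2]
  simpa only [card_univ, Fintype.card_fin] using
    sq_sum_le_card_mul_sum_sq (s := univ) (f := fun i : Fin p.darts.length =>
      x p.darts[i.1].fst - x p.darts[i.1].snd)

variable [Fintype V] [DecidableRel G.Adj]

theorem Walk.IsPath.sum_edges_sqDiff_le [CommRing R] [LinearOrder R] [IsStrictOrderedRing R]
    (x : V → R) {u v : V} {p : G.Walk u v} (hp : p.IsPath) :
    (p.edges.map (sqDiff x)).sum ≤ ∑ e ∈ G.edgeFinset, sqDiff x e := by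
  classical
  rw [← List.sum_toFinset _ hp.edges_nodup]
  refine sum_le_sum_of_subset_of_nonneg (fun e he => ?_) fun e _ _ => sqDiff_nonneg x e
  exact mem_edgeFinset.2 (p.edges_subset_edgeSet (List.mem_toFinset.1 he))

theorem sum_dart_edge_eq_two_nsmul_sum_edgeFinset [AddCommMonoid R] [DecidableEq V]
    (f : Sym2 V → R) :
    ∑ d : G.Dart, f d.edge = 2 • ∑ e ∈ G.edgeFinset, f e := by
  rw [← sum_fiberwise_of_maps_to (g := Dart.edge) (t := G.edgeFinset) (by simp), smul_sum]
  refine sum_congr rfl fun e he => ?_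
  rw [sum_congr rfl fun d hd => by rw [(mem_filter.1 hd).2], sum_const,
    dart_edge_fiber_card G e (mem_edgeFinset.1 he)]

theorem sum_dart_eq_sum_adj [AddCommMonoid R] (g : V → V → R) :
    ∑ d : G.Dart, g d.fst d.snd = ∑ i, ∑ j, if G.Adj i j then g i j else 0 := by
  rw [← sum_product', ← sum_filter]
  exact sum_bij' (fun d _ => d.toProd) (fun p h => ⟨p, (mem_filter.1 h).2⟩)
    (by simp) (by simp) (by simp) (by simp) (by simp)

variable [DecidableEq V]

theorem sum_edgeFinset_sqDiff [Field R] [CharZero R] (x : V → R) :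
    ∑ e ∈ G.edgeFinset, sqDiff x e = x ⬝ᵥ (G.lapMatrix R *ᵥ x) := by
  have h := sum_dart_edge_eq_two_nsmul_sum_edgeFinset (G := G) (sqDiff x)
  rw [← toLinearMap₂'_apply', lapMatrix_toLinearMap₂',
    ← sum_dart_eq_sum_adj (G := G) fun i j => (x i - x j) ^ 2]
  simp only [Dart.edge, sqDiff_mk, nsmul_eq_mul, Nat.cast_ofNat] at h
  rw [h]
  ring

theorem Connected.sq_sub_le_diam_mul [Field R] [LinearOrder R] [IsStrictOrderedRing R]
    (hG : G.Connected) (x : V → R) (u v : V) :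
    (x u - x v) ^ 2 ≤ G.diam * x ⬝ᵥ (G.lapMatrix R *ᵥ x) := by
  have := hG.nonempty
  obtain ⟨p, hp, hlen⟩ := hG.exists_path_of_dist u v
  have hlen_le : (p.length : R) ≤ G.diam := by
    rw [hlen]
    exact_mod_cast dist_le_diam (connected_iff_ediam_ne_top.1 hG)
  calc (x u - x v) ^ 2 ≤ p.length * (p.edges.map (sqDiff x)).sum :=
        p.sq_sub_le_length_mul_sum_edges x
    _ ≤ G.diam * ∑ e ∈ G.edgeFinset, sqDiff x e := by
        gcongr
        · exact List.sum_nonneg (by simp [sqDiff_nonneg])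
        · exact hp.sum_edges_sqDiff_le x
    _ = G.diam * x ⬝ᵥ (G.lapMatrix R *ᵥ x) := by rw [sum_edgeFinset_sqDiff]

theorem sum_lapMatrix_mulVec [CommRing R] (x : V → R) : ∑ i, (G.lapMatrix R *ᵥ x) i = 0 := by
  calc ∑ i, (G.lapMatrix R *ᵥ x) i = (fun _ => 1) ⬝ᵥ (G.lapMatrix R *ᵥ x) := by
        simp [dotProduct]
    _ = (G.lapMatrix R *ᵥ fun _ => 1) ⬝ᵥ x := by
        rw [dotProduct_mulVec, ← mulVec_transpose, (G.isSymm_lapMatrix R).eq]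
    _ = 0 := by rw [lapMatrix_mulVec_const_eq_zero, zero_dotProduct]

theorem Connected.four_le_card_mul_mul_diam [Field R] [LinearOrder R] [IsStrictOrderedRing R]
    (hG : G.Connected) {μ : R} (hμ : μ ∈ spectrum R (G.lapMatrix R)) (hμ0 : μ ≠ 0) :
    4 ≤ Fintype.card V * μ * G.diam := by
  obtain ⟨x, hx0, hx⟩ := exists_mulVec_eq_smul_of_mem_spectrum_s13 hμ
  have hsum : ∑ i, x i = 0 := by
    have h := G.sum_lapMatrix_mulVec (R := R) x
    rw [hx] at h
    simp only [Pi.smul_apply, smul_eq_mul, ← mul_sum] at h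
    exact (mul_eq_zero.1 h).resolve_left hμ0
  have hquad : x ⬝ᵥ (G.lapMatrix R *ᵥ x) = μ * ∑ i, x i ^ 2 := by
    rw [hx, dotProduct_smul, smul_eq_mul]
    simp only [dotProduct, sq]
  have hpos : 0 < ∑ i, x i ^ 2 := by
    obtain ⟨i, hi⟩ := Function.ne_iff.1 hx0
    exact sum_pos' (fun j _ => sq_nonneg _) ⟨i, mem_univ i, sq_pos_of_ne_zero hi⟩
  have := hG.nonempty
  obtain ⟨u, hu⟩ := Finite.exists_max x
  obtain ⟨w, hw⟩ := Finite.exists_min x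
  have hspread := four_mul_sum_sq_le_card_mul_sq_sub univ hsum (fun i _ => hw i)
    (fun i _ => hu i)
  have hpath := hG.sq_sub_le_diam_mul x u w
  rw [card_univ] at hspread
  rw [hquad] at hpath
  refine le_of_mul_le_mul_right ?_ hpos
  calc 4 * ∑ i, x i ^ 2 ≤ Fintype.card V * (x u - x w) ^ 2 := hspread
    _ ≤ Fintype.card V * (G.diam * (μ * ∑ i, x i ^ 2)) := by gcongr
    _ = Fintype.card V * μ * G.diam * ∑ i, x i ^ 2 := by ring

end SimpleGraph

theorem diam_ge_four_div_N_lambda2_general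
    (N : ℕ) (G : SimpleGraph (Fin N)) [DecidableRel G.Adj]
    (hG : G.Connected) :
    4 / ((N : ℝ) * sInf (spectrum ℝ (G.lapMatrix ℝ) \ {0})) ≤ (G.diam : ℝ) := by
  set S := spectrum ℝ (G.lapMatrix ℝ) \ {0}
  rcases S.eq_empty_or_nonempty with hS | hS
  · -- `sInf ∅ = 0`, and `4 / 0 = 0`
    simp [hS]
  have hmem : sInf S ∈ S := hS.csInf_mem ((Matrix.finite_spectrum _).subset Set.sdiff_subset)
  have h4 := hG.four_le_card_mul_mul_diam hmem.1 hmem.2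
  rw [Fintype.card_fin] at h4
  have hdiam : (0 : ℝ) ≤ G.diam := Nat.cast_nonneg _
  exact div_le_of_le_mul₀ (by nlinarith) hdiam (by linarith)

/-- For a connected simple graph `G` on `Fin N` (`N ≥ 2`) with
Laplacian `L` and algebraic connectivity `λ₂ = sInf (spectrum ℝ L \ {0})`, the
diameter satisfies `diam(G) ≥ 4 / (N·λ₂)`. -/
theorem diam_ge_four_div_N_lambda2
    (N : ℕ) (hN : 2 ≤ N) (G : SimpleGraph (Fin N)) [DecidableRel G.Adj]
    (hG : G.Connected) :
    4 / ((N : ℝ) * sInf (spectrum ℝ (G.lapMatrix ℝ) \ {0})) ≤ (G.diam : ℝ) :=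
  diam_ge_four_div_N_lambda2_general N G hG
end

section
/- Let G be a connected simple graph on vertex set Fin N with N ≥ 2, let L be its real Laplacian matrix, and let λ₂ := sInf(spectrum ℝ L \ {0}) be its smallest nonzero eigenvalue. Then λ₂ ≥ 4 / N². -/
/-!
Let `L x = μ x` with `μ ≠ 0` and `x ≠ 0`. Since `L 1 = 0` and `L` is symmetric, `x ⟂ 1`, so `x`
has mean zero; its values lie in `[m, M]` with `m = min x`, `M = max x`, and comparing with the
midpoint `(m + M) / 2` gives `4 ‖x‖² ≤ N (M - m)²`. Along a path from the minimiser to the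
maximiser (at most `N - 1` edges, all distinct), Cauchy–Schwarz gives
`(M - m)² ≤ (N - 1) xᵀ L x = (N - 1) μ ‖x‖²`. Hence `μ N (N - 1) ≥ 4`, so `μ ≥ 4 / N²`.
-/

open Matrix Finset

theorem four_mul_sum_sq_le_card_mul_sq_of_sum_eq_zero {ι R : Type*} [Fintype ι] [Field R]
    [LinearOrder R] [IsStrictOrderedRing R] {x : ι → R} {m M : R} (hx : ∑ i, x i = 0)
    (hm : ∀ i, m ≤ x i) (hM : ∀ i, x i ≤ M) :
    4 * ∑ i, x i ^ 2 ≤ Fintype.card ι * (M - m) ^ 2 := by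
  have hcentre :
      ∑ i, (2 * x i - (m + M)) ^ 2 = 4 * ∑ i, x i ^ 2 + Fintype.card ι * (m + M) ^ 2 := by
    simp only [sub_sq, sum_add_distrib, sum_sub_distrib, mul_pow, ← mul_sum, mul_assoc, ← sum_mul,
      hx, sum_const, card_univ, nsmul_eq_mul]
    ring
  calc 4 * ∑ i, x i ^ 2 ≤ ∑ i, (2 * x i - (m + M)) ^ 2 := by
        rw [hcentre]; exact le_add_of_nonneg_right (by positivity)
    _ ≤ ∑ _i : ι, (M - m) ^ 2 := sum_le_sum fun i _ => by nlinarith [hm i, hM i]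
    _ = Fintype.card ι * (M - m) ^ 2 := by simp

namespace SimpleGraph

variable {V : Type*} {G : SimpleGraph V}

namespace Walk

theorem sum_darts_sub_s14 {R : Type*} [AddCommGroup R] (x : V → R) {u v : V} (p : G.Walk u v) :
    (p.darts.map fun d => x d.snd - x d.fst).sum = x v - x u := by
  induction p with
  | nil => simp
  | cons h q ih => simp only [darts_cons, List.map_cons, List.sum_cons, ih]; abel

theorem IsTrail.nodup_darts_append_map_symm {u v : V} {p : G.Walk u v} (hp : p.IsTrail) :
    (p.darts ++ p.darts.map Dart.symm).Nodup := by
  have hedges : (p.darts.map Dart.edge).Nodup := hp.edges_nodup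
  refine List.nodup_append.mpr
    ⟨hedges.of_map _, (hedges.of_map _).map Dart.symm_involutive.injective, ?_⟩
  rintro d hd _ hd' rfl
  obtain ⟨e, he, rfl⟩ := List.mem_map.mp hd'
  exact e.symm_ne (List.inj_on_of_nodup_map hedges hd he (Dart.edge_symm e))

theorem IsTrail.sum_darts_add_swap_le {R : Type*} [AddCommMonoid R] [PartialOrder R]
    [IsOrderedAddMonoid R] [Fintype V] [DecidableRel G.Adj] {u v : V} {p : G.Walk u v}
    (hp : p.IsTrail) (f : V → V → R) (hf : ∀ a b, 0 ≤ f a b) :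
    (p.darts.map fun d => f d.fst d.snd + f d.snd d.fst).sum ≤
      ∑ a, ∑ b, if G.Adj a b then f a b else 0 := by
  classical
  set l := p.darts ++ p.darts.map Dart.symm
  have hl : (l.map Dart.toProd).Nodup := hp.nodup_darts_append_map_symm.map Dart.ext
  let F : V × V → R := fun q => if G.Adj q.1 q.2 then f q.1 q.2 else 0
  calc (p.darts.map fun d => f d.fst d.snd + f d.snd d.fst).sum
      = ((l.map Dart.toProd).map F).sum := by
        simp only [l, List.map_append, List.map_map, List.sum_append, List.sum_map_add]
        congr 1 <;> refine congrArg List.sum (List.map_congr_left fun d _ => ?_) <;>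
          simp [F, d.adj, G.adj_symm d.adj]
    _ = ∑ q ∈ (l.map Dart.toProd).toFinset, F q := (List.sum_toFinset F hl).symm
    _ ≤ ∑ q, F q := sum_le_univ_sum_of_nonneg fun q => ite_nonneg (hf _ _) le_rfl
    _ = ∑ a, ∑ b, if G.Adj a b then f a b else 0 := Fintype.sum_prod_type F

theorem IsTrail.sq_sub_le_length_mul {R : Type*} [CommRing R] [LinearOrder R]
    [IsStrictOrderedRing R] {u v : V} {p : G.Walk u v} (hp : p.IsTrail) (x : V → R) :
    (x v - x u) ^ 2 ≤ p.length * (p.darts.map fun d => (x d.snd - x d.fst) ^ 2).sum := by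
  classical
  have hnd : p.darts.Nodup := hp.edges_nodup.of_map _
  rw [← p.sum_darts_sub_s14 x, ← List.sum_toFinset _ hnd, ← List.sum_toFinset _ hnd, ← p.length_darts,
    ← List.toFinset_card_of_nodup hnd]
  exact sq_sum_le_card_mul_sum_sq

theorem IsTrail.two_mul_sq_sub_le {R : Type*} [CommRing R] [LinearOrder R] [IsStrictOrderedRing R]
    [Fintype V] [DecidableRel G.Adj] {u v : V} {p : G.Walk u v} (hp : p.IsTrail) (x : V → R) :
    2 * (x v - x u) ^ 2 ≤ p.length * ∑ a, ∑ b, if G.Adj a b then (x a - x b) ^ 2 else 0 := by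
  have hdarts := hp.sum_darts_add_swap_le (fun a b => (x a - x b) ^ 2) fun _ _ => sq_nonneg _
  have hswap : (p.darts.map fun d => (x d.fst - x d.snd) ^ 2 + (x d.snd - x d.fst) ^ 2) =
      p.darts.map fun d => 2 * (x d.snd - x d.fst) ^ 2 :=
    List.map_congr_left fun d _ => by ring
  rw [hswap, List.sum_map_mul_left] at hdarts
  calc 2 * (x v - x u) ^ 2
      ≤ 2 * (p.length * (p.darts.map fun d => (x d.snd - x d.fst) ^ 2).sum) := by
        gcongr; exact hp.sq_sub_le_length_mul x
    _ ≤ _ := by rw [mul_left_comm]; gcongr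

end Walk

variable [Fintype V] [DecidableEq V] [DecidableRel G.Adj]

theorem Connected.sq_sub_le_mul_dotProduct_lapMatrix_mulVec {R : Type*} [Field R] [LinearOrder R]
    [IsStrictOrderedRing R] (hG : G.Connected) (x : V → R) (u v : V) :
    (x v - x u) ^ 2 ≤ (Fintype.card V - 1) * (x ⬝ᵥ (G.lapMatrix R *ᵥ x)) := by
  obtain ⟨p, hp⟩ := (hG u v).some.toPath
  have hlen : (p.length : R) ≤ Fintype.card V - 1 := by
    rw [le_sub_iff_add_le]; exact_mod_cast hp.length_lt
  have henergy : x ⬝ᵥ (G.lapMatrix R *ᵥ x) =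
      (∑ a, ∑ b, if G.Adj a b then (x a - x b) ^ 2 else 0) / 2 := by
    rw [← toLinearMap₂'_apply', lapMatrix_toLinearMap₂']
  have hnonneg : 0 ≤ ∑ a, ∑ b, if G.Adj a b then (x a - x b) ^ 2 else 0 := by positivity
  have := hp.isTrail.two_mul_sq_sub_le x
  rw [henergy]
  nlinarith

theorem sum_eq_zero_of_lapMatrix_mulVec_eq_smul {R : Type*} [CommRing R] [NoZeroDivisors R]
    {x : V → R} {μ : R} (hμ : μ ≠ 0) (h : G.lapMatrix R *ᵥ x = μ • x) : ∑ i, x i = 0 := by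
  have : (fun _ => (1 : R)) ⬝ᵥ (G.lapMatrix R *ᵥ x) = 0 := by
    rw [dotProduct_mulVec, ← mulVec_transpose, G.isSymm_lapMatrix (R := R),
      lapMatrix_mulVec_const_eq_zero, zero_dotProduct]
  rw [h, dotProduct_smul, smul_eq_mul, mul_eq_zero] at this
  simpa [dotProduct] using this.resolve_left hμ

theorem Preconnected.lapMatrix_ne_zero {R : Type*} [Ring R] [CharZero R] [Nontrivial V]
    (hG : G.Preconnected) : G.lapMatrix R ≠ 0 := by
  obtain ⟨i⟩ := ‹Nontrivial V›.to_nonempty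
  intro h
  have hdiag : G.lapMatrix R i i = G.degree i := by simp [lapMatrix, degMatrix]
  rw [h, Matrix.zero_apply, eq_comm, Nat.cast_eq_zero] at hdiag
  exact (hG.degree_pos_of_nontrivial i).ne' hdiag

theorem Connected.four_le_mul_of_lapMatrix_mulVec_eq_smul {R : Type*} [Field R] [LinearOrder R]
    [IsStrictOrderedRing R] (hG : G.Connected) {x : V → R} {μ : R} (hx : x ≠ 0) (hμ : μ ≠ 0)
    (h : G.lapMatrix R *ᵥ x = μ • x) :
    4 ≤ μ * (Fintype.card V * (Fintype.card V - 1)) := by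
  have := hG.nonempty
  obtain ⟨imax, himax⟩ := Finite.exists_max x
  obtain ⟨imin, himin⟩ := Finite.exists_min x
  have hnorm : 0 < ∑ i, x i ^ 2 := by
    obtain ⟨i, hi⟩ := Function.ne_iff.mp hx
    exact (pow_pos (abs_pos.mpr hi) 2).trans_le ((sq_abs _).le.trans
      (single_le_sum (fun j _ => sq_nonneg (x j)) (mem_univ i)))
  have hquad : x ⬝ᵥ (G.lapMatrix R *ᵥ x) = μ * ∑ i, x i ^ 2 := by
    simp [h, dotProduct, sq, mul_sum, mul_left_comm]
  have hbound :
      4 * ∑ i, x i ^ 2 ≤ (μ * (Fintype.card V * (Fintype.card V - 1))) * ∑ i, x i ^ 2 :=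
    calc 4 * ∑ i, x i ^ 2
        ≤ Fintype.card V * (x imax - x imin) ^ 2 :=
          four_mul_sum_sq_le_card_mul_sq_of_sum_eq_zero
            (sum_eq_zero_of_lapMatrix_mulVec_eq_smul hμ h) himin himax
      _ ≤ Fintype.card V * ((Fintype.card V - 1) * (μ * ∑ i, x i ^ 2)) := by
          rw [← hquad]; gcongr; exact hG.sq_sub_le_mul_dotProduct_lapMatrix_mulVec x imin imax
      _ = (μ * (Fintype.card V * (Fintype.card V - 1))) * ∑ i, x i ^ 2 := by ring
  exact le_of_mul_le_mul_right hbound hnorm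

end SimpleGraph

/-- For a connected simple graph `G` on `Fin N` (`N ≥ 2`) with
Laplacian `L`, the algebraic connectivity satisfies
`λ₂ = sInf (spectrum ℝ L \ {0}) ≥ 4 / N²`. -/
theorem lambda2_ge_four_div_sq
    (N : ℕ) (hN : 2 ≤ N) (G : SimpleGraph (Fin N)) [DecidableRel G.Adj]
    (hG : G.Connected) :
    4 / (N : ℝ) ^ 2 ≤ sInf (spectrum ℝ (G.lapMatrix ℝ) \ {0}) := by
  have : Nontrivial (Fin N) := Fin.nontrivial_iff_two_le.mpr hN
  have hL : (G.lapMatrix ℝ).IsHermitian := G.isHermitian_lapMatrix (R := ℝ)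
  rw [hL.spectrum_real_eq_range_eigenvalues]
  obtain ⟨j, hj⟩ := Function.ne_iff.mp (hL.eigenvalues_eq_zero_iff.not.mpr
    hG.preconnected.lapMatrix_ne_zero)
  refine le_csInf ⟨_, Set.mem_range_self j, hj⟩ ?_
  rintro _ ⟨⟨i, rfl⟩, hi⟩
  have h4 := hG.four_le_mul_of_lapMatrix_mulVec_eq_smul
    ((WithLp.ofLp_eq_zero 2).ne.2 (hL.eigenvectorBasis.orthonormal.ne_zero i)) hi
    (hL.mulVec_eigenvectorBasis i)
  rw [Fintype.card_fin] at h4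
  have hN' : (2 : ℝ) ≤ N := by exact_mod_cast hN
  rw [div_le_iff₀ (by positivity)]
  nlinarith
end

section
/- Let c > 0 and let V : ℝ → ℝ be a differentiable function with V(t) ≥ 0 for all t ≥ 0 and V'(t) ≤ −c·√(V(t)) for all t ≥ 0. Then √(V(t)) ≤ √(V(0)) − (c/2)·t for all t in the interval [0, 2√(V(0))/c], and consequently V(t) = 0 for all t ≥ 2√(V(0))/c. -/
/-! Where `V > 0`, the chain rule turns `V' ≤ -c √V` into `(√V)' ≤ -c/2`, so `√V` decreases at
least linearly. Since `V` is nonincreasing, positivity of `V t` propagates back to `[0, t]`, which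
gives the bound wherever `V t > 0`; past `2 √(V 0) / c` the bound would make `√(V t)` negative, so
`V` must vanish there. -/

open Set

lemma sqrt_add_mul_le_of_deriv_le_neg_mul_sqrt {V : ℝ → ℝ} {a b c : ℝ} (hab : a ≤ b)
    (hcont : ContinuousOn V (Icc a b)) (hdiff : ∀ s ∈ Ioo a b, DifferentiableAt ℝ V s)
    (hpos : ∀ s ∈ Ioo a b, 0 < V s) (hV' : ∀ s ∈ Ioo a b, deriv V s ≤ -c * √(V s)) :
    √(V b) + c / 2 * b ≤ √(V a) + c / 2 * a := by
  have hderiv : ∀ s ∈ Ioo a b,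
      HasDerivAt (fun u => √(V u) + c / 2 * u) (deriv V s / (2 * √(V s)) + c / 2) s := by
    intro s hs
    have hsqrt := (hdiff s hs).hasDerivAt.sqrt (hpos s hs).ne'
    exact (hsqrt.add ((hasDerivAt_id' s).const_mul (c / 2))).congr_deriv (by rw [mul_one])
  have hanti : AntitoneOn (fun u => √(V u) + c / 2 * u) (Icc a b) := by
    refine antitoneOn_of_deriv_nonpos (convex_Icc a b)
      (hcont.sqrt.add (continuousOn_const.mul continuousOn_id)) ?_ ?_
    · rw [interior_Icc]
      exact fun s hs => (hderiv s hs).differentiableAt.differentiableWithinAt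
    · rw [interior_Icc]
      intro s hs
      have hroot : 0 < √(V s) := Real.sqrt_pos.mpr (hpos s hs)
      rw [(hderiv s hs).deriv]
      have hslope : deriv V s / (2 * √(V s)) ≤ -(c / 2) := by
        rw [div_le_iff₀ (mul_pos two_pos hroot)]
        linarith [hV' s hs]
      linarith
  exact hanti (left_mem_Icc.mpr hab) (right_mem_Icc.mpr hab) hab

lemma sqrt_le_sub_mul_of_deriv_le_neg_mul_sqrt {V : ℝ → ℝ} {c t : ℝ} (hc : 0 ≤ c)
    (hV : Differentiable ℝ V) (hV' : ∀ s, 0 ≤ s → deriv V s ≤ -c * √(V s))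
    (ht : 0 ≤ t) (hVt : 0 < V t) : √(V t) ≤ √(V 0) - c / 2 * t := by
  have hanti : AntitoneOn V (Ici 0) := by
    refine antitoneOn_of_deriv_nonpos (convex_Ici 0) hV.continuous.continuousOn
      hV.differentiableOn fun s hs => ?_
    rw [interior_Ici] at hs
    nlinarith [hV' s hs.le, Real.sqrt_nonneg (V s)]
  have hpos : ∀ s ∈ Ioo 0 t, 0 < V s := fun s hs =>
    hVt.trans_le (hanti (mem_Ici.mpr hs.1.le) (mem_Ici.mpr ht) hs.2.le)
  have := sqrt_add_mul_le_of_deriv_le_neg_mul_sqrt ht hV.continuous.continuousOn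
    (fun s _ => hV s) hpos (fun s hs => hV' s hs.1.le)
  linarith

/-- Finite-time convergence via the comparison lemma.  If `c > 0`
and `V : ℝ → ℝ` is differentiable with `V(t) ≥ 0` and `V'(t) ≤ −c√(V(t))` for
all `t ≥ 0`, then `√(V(t)) ≤ √(V(0)) − (c/2)t` on `[0, 2√(V(0))/c]`, and
`V(t) = 0` for all `t ≥ 2√(V(0))/c`. -/
theorem finite_time_convergence
    (c : ℝ) (hc : 0 < c)
    (V : ℝ → ℝ) (hV : Differentiable ℝ V)
    (hVnonneg : ∀ t : ℝ, 0 ≤ t → 0 ≤ V t)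
    (hV' : ∀ t : ℝ, 0 ≤ t → deriv V t ≤ -c * Real.sqrt (V t)) :
    (∀ t ∈ Set.Icc (0 : ℝ) (2 * Real.sqrt (V 0) / c),
        Real.sqrt (V t) ≤ Real.sqrt (V 0) - (c / 2) * t) ∧
    (∀ t : ℝ, 2 * Real.sqrt (V 0) / c ≤ t → V t = 0) := by
  have hbound := fun t => sqrt_le_sub_mul_of_deriv_le_neg_mul_sqrt (t := t) hc.le hV hV'
  constructor
  · rintro t ⟨ht0, htT⟩
    rcases lt_or_ge 0 (V t) with hVt | hVt
    · exact hbound t ht0 hVt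
    · rw [Real.sqrt_eq_zero'.mpr hVt, sub_nonneg]
      rw [le_div_iff₀ hc] at htT
      linarith
  · intro t ht
    have ht0 : 0 ≤ t := (by positivity : 0 ≤ 2 * √(V 0) / c).trans ht
    refine le_antisymm (not_lt.mp fun hVt => ?_) (hVnonneg t ht0)
    rw [div_le_iff₀ hc] at ht
    linarith [hbound t ht0 hVt, Real.sqrt_pos.mpr hVt]
end
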